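/- arXiv:1411.3270 — 9 statements merged into one kernel-verified Lean document; each statement's English description precedes it below -/
import Mathlib

section
/- For integers n ≥ 2 and 1 ≤ p ≤ r ≤ n-1, we have ∑_{k=p}^{r} k * C(n-1-k, r-k) = ((n*p - p*r + r)/(n - r + 1)) * C(n-p, r-p). -/
/-!
Substituting `k = r - t` and `a = n - 1 - r` turns the sum into `∑_{t ≤ r - p} (r - t) C(t + a, a)`.
The hockey-stick identity and its weighted companion `∑_{t ≤ N} t C(t + a, a) = (a + 1) C(N + a + 1, a + 2)`
evaluate it as `r C(n - p, n - r) - (n - r) C(n - p, n - r + 1)`, and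
`C(n - p, n - r + 1) (n - r + 1) = C(n - p, r - p) (r - p)` gives the closed form.
-/

open Finset

theorem Finset.sum_Icc_eq_sum_range_sub {M : Type*} [AddCommMonoid M] (f : ℕ → M) {p r : ℕ}
    (h : p ≤ r) : ∑ k ∈ Icc p r, f k = ∑ t ∈ range (r - p + 1), f (r - t) := by
  refine sum_nbij' (r - ·) (r - ·) ?_ ?_ ?_ ?_ ?_ <;> intro x hx <;>
    simp only [mem_Icc, mem_range] at hx ⊢
  all_goals first | omega | (congr 1; omega)

theorem Nat.sum_range_mul_add_choose (N a : ℕ) :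
    ∑ t ∈ range (N + 1), t * (t + a).choose a = (a + 1) * (N + a + 1).choose (a + 2) := by
  induction N with
  | zero => simp
  | succ N ih =>
    have hpascal := choose_succ_right_eq (N + a + 1) a
    rw [show N + a + 1 - a = N + 1 by omega] at hpascal
    rw [sum_range_succ, ih, show N + 1 + a + 1 = (N + a + 1) + 1 by ring,
      choose_succ_succ' (N + a + 1) (a + 1), show N + 1 + a = N + a + 1 by ring]
    linarith

theorem sum_Icc_mul_choose_eq {n p r : ℕ} (hpr : p ≤ r) (hrn : r < n) :
    ∑ k ∈ Icc p r, (k : ℚ) * (n - 1 - k).choose (r - k) =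
      r * (n - p).choose (n - r) - ((n - r : ℕ) : ℚ) * (n - p).choose (n - r + 1) := by
  set a := n - 1 - r
  have hterm : ∀ t ∈ range (r - p + 1),
      ((r - t : ℕ) : ℚ) * (n - 1 - (r - t)).choose (r - (r - t)) =
        r * (t + a).choose a - (t * (t + a).choose a : ℕ) := by
    intro t ht
    have ht : t ≤ r := by rw [mem_range] at ht; omega
    rw [show n - 1 - (r - t) = t + a by omega, show r - (r - t) = t by omega, ← Nat.choose_symm_add]
    push_cast [ht]
    ring
  rw [sum_Icc_eq_sum_range_sub _ hpr, sum_congr rfl hterm, sum_sub_distrib, ← mul_sum,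
    ← Nat.cast_sum, ← Nat.cast_sum, Nat.sum_range_mul_add_choose, Nat.sum_range_add_choose,
    show r - p + a + 1 = n - p by omega, show a + 1 = n - r by omega,
    show a + 2 = n - r + 1 by omega]
  push_cast
  ring

theorem stmt_0_general (n p r : ℕ) (hn : 2 ≤ n) (hpr : p ≤ r) (hr : r ≤ n - 1) :
    ∑ k ∈ Finset.Icc p r, (k : ℚ) * (Nat.choose (n - 1 - k) (r - k) : ℚ) =
      ((n : ℚ) * p - p * r + r) / ((n : ℚ) - r + 1) * (Nat.choose (n - p) (r - p) : ℚ) := by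
  have hrn : r < n := by omega
  have hsymm : (n - p).choose (n - r) = (n - p).choose (r - p) := by
    rw [show n - r = (n - p) - (r - p) by omega, Nat.choose_symm (by omega)]
  have hratio : ((n - p).choose (n - r + 1) : ℚ) * (n - r + 1) = (n - p).choose (n - r) * (r - p) := by
    have h := Nat.choose_succ_right_eq (n - p) (n - r)
    rw [show n - p - (n - r) = r - p by omega] at h
    have h' := congrArg (Nat.cast : ℕ → ℚ) h
    push_cast [hpr, hrn.le] at h'
    linear_combination h'
  have hD : (n : ℚ) - r + 1 ≠ 0 := by
    have : (r : ℚ) < n := by exact_mod_cast hrn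
    linarith
  rw [sum_Icc_mul_choose_eq hpr hrn, ← hsymm, div_mul_eq_mul_div, eq_div_iff hD]
  push_cast [hrn.le]
  linear_combination (-(n : ℚ) + r) * hratio

theorem stmt_0 (n p r : ℕ) (hn : 2 ≤ n) (hp : 1 ≤ p) (hpr : p ≤ r) (hr : r ≤ n - 1) :
    ∑ k ∈ Finset.Icc p r, (k : ℚ) * (Nat.choose (n - 1 - k) (r - k) : ℚ) =
      ((n : ℚ) * p - p * r + r) / ((n : ℚ) - r + 1) * (Nat.choose (n - p) (r - p) : ℚ) :=
  stmt_0_general n p r hn hpr hr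
end

section
/- For every real θ, n ≥ 1, 1 ≤ p ≤ n and 0 ≤ j ≤ p, the coefficients f^n_{p,j}(θ) defined by the expansion (e^θ D + E)^n = ∑_{p=1}^n ∑_{j=0}^p f^n_{p,j}(θ) E^{p-j} D^j (with the recursion from the relation DE = D + E) satisfy the symmetry f^n_{p,j}(θ) = e^{nθ} f^n_{p,p-j}(-θ). -/
/-!
Coefficient arrays of normally ordered elements carry left and right multiplications by `D` and
by `E`. Each left multiplication commutes with each right one (associativity of the algebra with
`DE = D + E`, checked on generators), so the coefficients of `(tD + E)^n`, defined by right
multiplication, are also produced by left multiplication by `tD + E`. The anti-automorphism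
exchanging `D` and `E` (it preserves `DE = D + E`) sends `E^(p-j) D^j` to `E^j D^(p-j)`, and left
multiplication by `tD + E` to `t` times right multiplication by `t⁻¹D + E`. By induction,
reversing the coefficients of `(tD + E)^n` gives `t^n` times those of `(t⁻¹D + E)^n`; at
`t = e^θ` this is the symmetry.
-/

open Finset

namespace Finset

theorem sum_Icc_add_one_add_one {M : Type*} [AddCommMonoid M] (f : ℕ → M) (a b : ℕ) :
    ∑ k ∈ Icc (a + 1) (b + 1), f k = ∑ k ∈ Icc a b, f (k + 1) := by
  rw [← map_add_right_Icc, sum_map]; rfl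

theorem sum_sum_Icc_reflect {M : Type*} [AddCommMonoid M] (u : ℕ → ℕ → M) {m n : ℕ}
    (hmn : m ≤ n) (p c : ℕ) :
    ∑ k ∈ Icc p n, ∑ l ∈ Icc k m, u l (l - k + c) =
      ∑ k ∈ Icc p n, ∑ l ∈ Icc k m, u l (k - p + c) := by
  have swap (g : ℕ → ℕ → M) :
      ∑ k ∈ Icc p n, ∑ l ∈ Icc k m, g k l = ∑ l ∈ Icc p m, ∑ k ∈ Icc p l, g k l :=
    sum_comm' fun k l => by simp only [mem_Icc]; omega
  rw [swap, swap]
  refine sum_congr rfl fun l _ => ?_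
  refine sum_nbij' (fun k => p + l - k) (fun k => p + l - k) ?_ ?_ ?_ ?_ ?_ <;>
    intro k hk <;> simp only [mem_Icc] at hk ⊢ <;> first | omega | congr 1; omega

end Finset

namespace NormalOrder

/-- `u p j` is the coefficient of `E^(p-j) D^j`. The multiplication operators below vanish off
the triangle `j ≤ p` and at `p = 0`, since a product of generators is never a scalar. -/
abbrev Coeffs (K : Type*) := ℕ → ℕ → K

section CommSemiring

variable {K : Type*} [CommSemiring K]

def mulRightD : Coeffs K →ₗ[K] Coeffs K where
  toFun u p j := if 0 < j ∧ j ≤ p then u (p - 1) (j - 1) else 0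
  map_add' u v := by ext p j; simp only [Pi.add_apply]; split_ifs <;> simp
  map_smul' c u := by
    ext p j; simp only [Pi.smul_apply, smul_eq_mul, RingHom.id_apply]; split_ifs <;> simp

def mulLeftE : Coeffs K →ₗ[K] Coeffs K where
  toFun u p j := if j < p then u (p - 1) j else 0
  map_add' u v := by ext p j; simp only [Pi.add_apply]; split_ifs <;> simp
  map_smul' c u := by
    ext p j; simp only [Pi.smul_apply, smul_eq_mul, RingHom.id_apply]; split_ifs <;> simp

/-- Right multiplication by `E`, from `D^b E = D^b + ⋯ + D + E`, on arrays supported in `p ≤ m`. -/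
def mulRightE (m : ℕ) : Coeffs K →ₗ[K] Coeffs K where
  toFun u p j :=
    if 0 < p ∧ j ≤ p then
      if j = 0 then u (p - 1) 0 + ∑ k ∈ Icc p m, u k (k - p + 1)
      else ∑ k ∈ Icc p m, u k (k - p + j)
    else 0
  map_add' u v := by
    ext p j; simp only [Pi.add_apply]; split_ifs <;> simp [sum_add_distrib, add_add_add_comm]
  map_smul' c u := by
    ext p j; simp only [Pi.smul_apply, smul_eq_mul, RingHom.id_apply]
    split_ifs <;> simp only [mul_sum, mul_add, mul_zero]

/-- Left multiplication by `D`, from `D E^a = E^a + ⋯ + E + D`, on arrays supported in `p ≤ m`. -/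
def mulLeftD (m : ℕ) : Coeffs K →ₗ[K] Coeffs K where
  toFun u p j :=
    if 0 < p ∧ j ≤ p then
      if j = p then u (p - 1) (p - 1) + ∑ k ∈ Icc p m, u k (p - 1)
      else ∑ k ∈ Icc p m, u k j
    else 0
  map_add' u v := by
    ext p j; simp only [Pi.add_apply]; split_ifs <;> simp [sum_add_distrib, add_add_add_comm]
  map_smul' c u := by
    ext p j; simp only [Pi.smul_apply, smul_eq_mul, RingHom.id_apply]
    split_ifs <;> simp only [mul_sum, mul_add, mul_zero]

theorem mulRightD_apply (u : Coeffs K) (p j : ℕ) :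
    mulRightD u p j = if 0 < j ∧ j ≤ p then u (p - 1) (j - 1) else 0 := rfl

theorem mulLeftE_apply (u : Coeffs K) (p j : ℕ) :
    mulLeftE u p j = if j < p then u (p - 1) j else 0 := rfl

theorem mulRightE_apply (m : ℕ) (u : Coeffs K) (p j : ℕ) :
    mulRightE m u p j =
      if 0 < p ∧ j ≤ p then
        if j = 0 then u (p - 1) 0 + ∑ k ∈ Icc p m, u k (k - p + 1)
        else ∑ k ∈ Icc p m, u k (k - p + j)
      else 0 := rfl

theorem mulLeftD_apply (m : ℕ) (u : Coeffs K) (p j : ℕ) :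
    mulLeftD m u p j =
      if 0 < p ∧ j ≤ p then
        if j = p then u (p - 1) (p - 1) + ∑ k ∈ Icc p m, u k (p - 1)
        else ∑ k ∈ Icc p m, u k j
      else 0 := rfl

theorem mulLeftE_comp_mulRightD :
    (mulLeftE : Coeffs K →ₗ[K] _) ∘ₗ mulRightD = mulRightD ∘ₗ mulLeftE := by
  ext u p j
  simp only [LinearMap.comp_apply, mulLeftE_apply, mulRightD_apply]
  split_ifs <;> first | rfl | omega

theorem mulLeftE_comp_mulRightE (m : ℕ) :
    (mulLeftE : Coeffs K →ₗ[K] _) ∘ₗ mulRightE m = mulRightE (m + 1) ∘ₗ mulLeftE := by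
  ext u p j
  simp only [LinearMap.comp_apply, mulLeftE_apply, mulRightE_apply]
  obtain _ | q := p
  · simp
  simp only [sum_Icc_add_one_add_one, Nat.add_sub_cancel]
  have hs (c : ℕ) :
      ∑ k ∈ Icc q m, (if k + 1 - (q + 1) + c < k + 1 then u k (k + 1 - (q + 1) + c) else 0) =
        if c ≤ q then ∑ k ∈ Icc q m, u k (k - q + c) else 0 := by
    split_ifs with hc
    · refine sum_congr rfl fun k hk => ?_
      rw [mem_Icc] at hk
      rw [if_pos (by omega)]; congr 1; omega
    · exact sum_eq_zero fun k _ => if_neg (by omega)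
  rw [hs, hs]
  split_ifs <;> first | rfl | omega | simp

theorem mulLeftD_comp_mulRightD (m : ℕ) :
    mulLeftD (m + 1) ∘ₗ mulRightD = mulRightD ∘ₗ (mulLeftD m : Coeffs K →ₗ[K] _) := by
  ext u p j
  simp only [LinearMap.comp_apply, mulLeftD_apply, mulRightD_apply]
  obtain _ | q := p
  · simp
  simp only [sum_Icc_add_one_add_one, Nat.add_sub_cancel]
  have hs (c : ℕ) (hc : c ≤ q + 1) :
      ∑ k ∈ Icc q m, (if 0 < c ∧ c ≤ k + 1 then u k (c - 1) else 0) =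
        if 0 < c then ∑ k ∈ Icc q m, u k (c - 1) else 0 := by
    split_ifs with h0
    · exact sum_congr rfl fun k hk => if_pos (by rw [mem_Icc] at hk; omega)
    · exact sum_eq_zero fun k _ => if_neg (by omega)
  rcases lt_trichotomy j (q + 1) with hj | rfl | hj
  · rw [hs j hj.le]; split_ifs <;> first | rfl | omega
  · rw [hs q (by omega)]; split_ifs <;> first | rfl | omega | simp
  · simp [hj.not_ge]

section Sums

variable (m : ℕ) (u : Coeffs K)

theorem sum_mulRightE_of_pos {p c : ℕ} (hc : 0 < c) (hcp : c ≤ p) (n : ℕ) :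
    ∑ k ∈ Icc p n, mulRightE m u k c = ∑ k ∈ Icc p n, ∑ l ∈ Icc k m, u l (l - k + c) := by
  refine sum_congr rfl fun k hk => ?_
  rw [mem_Icc] at hk
  rw [mulRightE_apply, if_pos ⟨by omega, by omega⟩, if_neg hc.ne']

theorem sum_mulLeftD_of_lt {p c : ℕ} (hcp : c < p) (n : ℕ) :
    ∑ k ∈ Icc p n, mulLeftD m u k (k - p + c) = ∑ k ∈ Icc p n, ∑ l ∈ Icc k m, u l (k - p + c) := by
  refine sum_congr rfl fun k hk => ?_
  rw [mem_Icc] at hk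
  rw [mulLeftD_apply, if_pos ⟨by omega, by omega⟩, if_neg (by omega)]

theorem sum_mulRightE_zero (p : ℕ) :
    ∑ k ∈ Icc (p + 1) (m + 1), mulRightE m u k 0 =
      ∑ k ∈ Icc p m, u k 0 + ∑ k ∈ Icc (p + 1) (m + 1), ∑ l ∈ Icc k m, u l (l - k + 1) := by
  have shift := sum_Icc_add_one_add_one (fun k => u (k - 1) 0) p m
  simp only [Nat.add_sub_cancel] at shift
  rw [← shift, ← sum_add_distrib]
  refine sum_congr rfl fun k hk => ?_
  rw [mem_Icc] at hk
  rw [mulRightE_apply, if_pos ⟨by omega, by omega⟩, if_pos rfl]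

theorem sum_mulLeftD_self (p : ℕ) :
    ∑ k ∈ Icc (p + 1) (m + 1), mulLeftD m u k k =
      ∑ k ∈ Icc p m, u k k + ∑ k ∈ Icc (p + 1) (m + 1), ∑ l ∈ Icc k m, u l (k - 1) := by
  have shift := sum_Icc_add_one_add_one (fun k => u (k - 1) (k - 1)) p m
  simp only [Nat.add_sub_cancel] at shift
  rw [← shift, ← sum_add_distrib]
  refine sum_congr rfl fun k hk => ?_
  rw [mem_Icc] at hk
  rw [mulLeftD_apply, if_pos ⟨by omega, le_rfl⟩, if_pos rfl]

/-- Both sides sum `u` over the triangle `j ≤ p ≤ m`, by diagonals and by columns. -/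
theorem sum_mulRightE_zero_eq_sum_mulLeftD_self :
    ∑ k ∈ Icc 1 (m + 1), mulRightE m u k 0 = ∑ k ∈ Icc 1 (m + 1), mulLeftD m u k k := by
  have diagonal : ∀ i ∈ Icc 0 m, mulRightE m u (i + 1) 0 = ∑ l ∈ Icc i m, u l (l - i + 0) := by
    intro i hi
    rw [mem_Icc] at hi
    rw [mulRightE_apply, if_pos (by omega), if_pos rfl, ← insert_Icc_add_one_left_eq_Icc hi.2,
      sum_insert (by simp), Nat.add_sub_cancel, Nat.sub_self]
    congr 1
    exact sum_congr rfl fun l hl => by rw [mem_Icc] at hl; congr 1; omega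
  have column : ∀ i ∈ Icc 0 m, mulLeftD m u (i + 1) (i + 1) = ∑ l ∈ Icc i m, u l (i - 0 + 0) := by
    intro i hi
    rw [mem_Icc] at hi
    rw [mulLeftD_apply, if_pos (by omega), if_pos rfl, ← insert_Icc_add_one_left_eq_Icc hi.2,
      sum_insert (by simp), Nat.add_sub_cancel]
    rfl
  change ∑ k ∈ Icc (0 + 1) (m + 1), _ = ∑ k ∈ Icc (0 + 1) (m + 1), _
  rw [sum_Icc_add_one_add_one, sum_Icc_add_one_add_one, sum_congr rfl diagonal,
    sum_congr rfl column]
  exact sum_sum_Icc_reflect u le_rfl 0 0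

theorem mulLeftD_mulRightE_apply_one {j : ℕ} (hj : j ≤ 1) :
    mulLeftD (m + 1) (mulRightE m u) 1 j = mulRightE (m + 1) (mulLeftD m u) 1 j := by
  have hk : ∑ k ∈ Icc 1 (m + 1), mulLeftD m u k (k - 1 + 1) =
      ∑ k ∈ Icc 1 (m + 1), mulLeftD m u k k :=
    sum_congr rfl fun k hk => by rw [mem_Icc] at hk; rw [Nat.sub_add_cancel hk.1]
  have hR0 : mulRightE m u 0 0 = 0 := by simp [mulRightE_apply]
  have hL0 : mulLeftD m u 0 0 = 0 := by simp [mulLeftD_apply]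
  rw [mulLeftD_apply (m + 1), mulRightE_apply (m + 1)]
  interval_cases j <;>
    simp only [hk, hR0, hL0, zero_add, sum_mulRightE_zero_eq_sum_mulLeftD_self] <;> simp

end Sums

theorem mulLeftD_comp_mulRightE (m : ℕ) :
    mulLeftD (m + 1) ∘ₗ mulRightE m = mulRightE (m + 1) ∘ₗ (mulLeftD m : Coeffs K →ₗ[K] _) := by
  ext u p j
  rw [LinearMap.comp_apply, LinearMap.comp_apply]
  obtain _ | q := p
  · simp [mulLeftD_apply, mulRightE_apply]
  rcases Nat.lt_or_ge (q + 1) j with hj | hj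
  · simp [mulLeftD_apply, mulRightE_apply, hj.not_ge]
  obtain rfl | hq := eq_or_ne q 0
  · exact mulLeftD_mulRightE_apply_one m u hj
  rw [mulLeftD_apply (m + 1), mulRightE_apply (m + 1)]
  simp only [if_pos (And.intro q.succ_pos hj), Nat.add_sub_cancel]
  have reflect (c : ℕ) := sum_sum_Icc_reflect u (Nat.le_add_right m 1) (q + 1) c
  rcases Nat.eq_zero_or_pos j with rfl | hj0
  · rw [if_neg (by omega), if_pos rfl, sum_mulRightE_zero, reflect,
      sum_mulLeftD_of_lt _ _ (by omega), mulLeftD_apply, if_pos (by omega), if_neg hq.symm]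
  rcases hj.lt_or_eq with hjq | rfl
  · rw [if_neg hjq.ne, if_neg hj0.ne', sum_mulRightE_of_pos _ _ hj0 hj, reflect,
      sum_mulLeftD_of_lt _ _ hjq]
  have hR : mulRightE m u q q = ∑ l ∈ Icc q m, u l l := by
    rw [mulRightE_apply, if_pos ⟨by omega, le_rfl⟩, if_neg hq]
    exact sum_congr rfl fun l hl => by rw [mem_Icc] at hl; rw [Nat.sub_add_cancel hl.1]
  have hL : ∑ k ∈ Icc (q + 1) (m + 1), mulLeftD m u k (k - (q + 1) + (q + 1)) =
      ∑ k ∈ Icc (q + 1) (m + 1), mulLeftD m u k k :=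
    sum_congr rfl fun k hk => by rw [mem_Icc] at hk; rw [Nat.sub_add_cancel hk.1]
  rw [if_pos rfl, if_neg (by omega), hR, sum_mulRightE_of_pos _ _ (by omega) (by omega), reflect,
    hL, sum_mulLeftD_self]
  congr 1
  refine sum_congr rfl fun k hk => sum_congr rfl fun l _ => ?_
  rw [mem_Icc] at hk
  congr 1
  omega

def mulRight (t : K) (m : ℕ) : Coeffs K →ₗ[K] Coeffs K := t • mulRightD + mulRightE m

def mulLeft (t : K) (m : ℕ) : Coeffs K →ₗ[K] Coeffs K := t • mulLeftD m + mulLeftE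

theorem mulLeft_comp_mulRight (t : K) (m : ℕ) :
    mulLeft t (m + 1) ∘ₗ mulRight t m = mulRight t (m + 1) ∘ₗ mulLeft t m := by
  simp only [mulLeft, mulRight, LinearMap.add_comp, LinearMap.comp_add, LinearMap.smul_comp,
    LinearMap.comp_smul, mulLeftE_comp_mulRightD, mulLeftE_comp_mulRightE, mulLeftD_comp_mulRightD,
    mulLeftD_comp_mulRightE, smul_add]
  abel

theorem mulRight_apply_zero (t : K) (m : ℕ) (u : Coeffs K) (j : ℕ) : mulRight t m u 0 j = 0 := by
  simp only [mulRight, LinearMap.add_apply, LinearMap.smul_apply, Pi.add_apply, Pi.smul_apply,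
    smul_eq_mul, mulRightD_apply, mulRightE_apply]
  rw [if_neg (by omega), if_neg (by omega), mul_zero, add_zero]

theorem mulRight_apply_of_pos (t : K) (m : ℕ) (u : Coeffs K) {p j : ℕ} (hp : 0 < p) (hj : j ≤ p) :
    mulRight t m u p j =
      if j = 0 then u (p - 1) 0 + ∑ k ∈ Icc p m, u k (k - p + 1)
      else t * u (p - 1) (j - 1) + ∑ k ∈ Icc p m, u k (k - p + j) := by
  simp only [mulRight, LinearMap.add_apply, LinearMap.smul_apply, Pi.add_apply, Pi.smul_apply,
    smul_eq_mul, mulRightD_apply, mulRightE_apply, if_pos (And.intro hp hj)]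
  split_ifs <;> simp_all

theorem mulRight_congr (t : K) (m : ℕ) {u v : Coeffs K}
    (h : ∀ a b, b ≤ a → a ≤ m → u a b = v a b) {p j : ℕ} (hj : j ≤ p) (hp : p ≤ m + 1) :
    mulRight t m u p j = mulRight t m v p j := by
  obtain rfl | hp0 := Nat.eq_zero_or_pos p
  · rw [mulRight_apply_zero, mulRight_apply_zero]
  have hsum (c : ℕ) (hc : c ≤ p) :
      ∑ k ∈ Icc p m, u k (k - p + c) = ∑ k ∈ Icc p m, v k (k - p + c) :=
    sum_congr rfl fun k hk => by rw [mem_Icc] at hk; exact h _ _ (by omega) hk.2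
  rw [mulRight_apply_of_pos t m u hp0 hj, mulRight_apply_of_pos t m v hp0 hj, hsum 1 hp0, hsum j hj]
  split_ifs
  · rw [h _ _ (by omega) (by omega)]
  · rw [h _ _ (by omega) (by omega)]

/-- `powCoeffs (e^θ) n p j` is the paper's `f^n_{p,j}(θ)`. -/
def powCoeffs (t : K) : ℕ → Coeffs K
  | 0 => fun p j => if p = 0 ∧ j = 0 then 1 else 0
  | n + 1 => mulRight t n (powCoeffs t n)

theorem powCoeffs_apply_zero_left (t : K) {n : ℕ} (hn : 1 ≤ n) (j : ℕ) :
    powCoeffs t n 0 j = 0 := by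
  obtain ⟨n, rfl⟩ : ∃ m, n = m + 1 := ⟨n - 1, by omega⟩
  exact mulRight_apply_zero t n _ j

theorem powCoeffs_succ_eq_mulLeft (t : K) (n : ℕ) :
    powCoeffs t (n + 1) = mulLeft t n (powCoeffs t n) := by
  induction n with
  | zero =>
    ext p j
    simp only [powCoeffs, mulRight, mulLeft, LinearMap.add_apply, LinearMap.smul_apply,
      Pi.add_apply, Pi.smul_apply, smul_eq_mul, mulRightD_apply, mulRightE_apply, mulLeftD_apply,
      mulLeftE_apply]
    split_ifs <;> simp_all <;> omega
  | succ n ih =>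
    calc powCoeffs t (n + 2) = mulRight t (n + 1) (mulLeft t n (powCoeffs t n)) := by
          rw [← ih]; rfl
      _ = mulLeft t (n + 1) (powCoeffs t (n + 1)) :=
          (LinearMap.congr_fun (mulLeft_comp_mulRight t n) _).symm

/-- The anti-automorphism exchanging `D` and `E`, on coefficients. -/
def reverse : Coeffs K →ₗ[K] Coeffs K where
  toFun u p j := if j ≤ p then u p (p - j) else 0
  map_add' u v := by ext p j; simp only [Pi.add_apply]; split_ifs <;> simp
  map_smul' c u := by
    ext p j; simp only [Pi.smul_apply, smul_eq_mul, RingHom.id_apply]; split_ifs <;> simp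

theorem reverse_apply (u : Coeffs K) (p j : ℕ) :
    reverse u p j = if j ≤ p then u p (p - j) else 0 := rfl

theorem reverse_comp_mulLeftE :
    (reverse : Coeffs K →ₗ[K] _) ∘ₗ mulLeftE = mulRightD ∘ₗ reverse := by
  ext u p j
  simp only [LinearMap.comp_apply, reverse_apply, mulLeftE_apply, mulRightD_apply]
  split_ifs <;> first | rfl | omega | (congr 1; omega)

theorem reverse_comp_mulLeftD (m : ℕ) :
    (reverse : Coeffs K →ₗ[K] _) ∘ₗ mulLeftD m = mulRightE m ∘ₗ reverse := by
  ext u p j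
  simp only [LinearMap.comp_apply, reverse_apply, mulLeftD_apply, mulRightE_apply]
  have hsum (c : ℕ) (hc : c ≤ p) : ∑ k ∈ Icc p m, u k (p - c) =
      ∑ k ∈ Icc p m, if k - p + c ≤ k then u k (k - (k - p + c)) else 0 :=
    sum_congr rfl fun k hk => by
      rw [mem_Icc] at hk; rw [if_pos (by omega)]; congr 1; omega
  split_ifs <;> first | rfl | omega | skip
  · rw [Nat.sub_zero, ← hsum 1 (by omega)]
  · exact hsum j (by omega)

end CommSemiring

section Field

variable {K : Type*} [Field K] {t : K}

theorem reverse_comp_mulLeft (ht : t ≠ 0) (m : ℕ) :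
    reverse ∘ₗ mulLeft t m = t • (mulRight t⁻¹ m ∘ₗ reverse) := by
  simp only [mulLeft, mulRight, LinearMap.comp_add, LinearMap.comp_smul, LinearMap.add_comp,
    LinearMap.smul_comp, reverse_comp_mulLeftD, reverse_comp_mulLeftE, smul_add, smul_smul,
    mul_inv_cancel₀ ht, one_smul]
  abel

theorem reverse_powCoeffs (ht : t ≠ 0) (n : ℕ) :
    reverse (powCoeffs t n) = t ^ n • powCoeffs t⁻¹ n := by
  induction n with
  | zero =>
    ext p j
    simp only [reverse_apply, powCoeffs, pow_zero, one_smul]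
    split_ifs <;> first | rfl | omega
  | succ n ih =>
    rw [powCoeffs_succ_eq_mulLeft, ← LinearMap.comp_apply, reverse_comp_mulLeft ht,
      LinearMap.smul_apply, LinearMap.comp_apply, ih, map_smul, smul_smul, pow_succ']
    rfl

theorem powCoeffs_symm (ht : t ≠ 0) (n : ℕ) {p j : ℕ} (hj : j ≤ p) :
    powCoeffs t n p j = t ^ n * powCoeffs t⁻¹ n p (p - j) := by
  simpa [reverse_apply, Nat.sub_sub_self hj] using congr_fun₂ (reverse_powCoeffs ht n) p (p - j)

/-- The recursion of the statement, with `t` in place of `e^θ`. -/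
structure IsRightMulRecursion (g : ℕ → Coeffs K) (t : K) : Prop where
  base_zero : g 1 1 0 = 1
  base_one : g 1 1 1 = t
  row_one : ∀ n, 1 < n → ∀ j ≤ 1, g n 1 j = ∑ k ∈ Icc 1 (n - 1), g (n - 1) k k
  mid_zero : ∀ n p, 1 < n → 1 < p → p < n →
    g n p 0 = g (n - 1) (p - 1) 0 + ∑ k ∈ Icc p (n - 1), g (n - 1) k (k - p + 1)
  mid_pos : ∀ n p j, 1 < n → 0 < j → j ≤ p → p < n →
    g n p j = t * g (n - 1) (p - 1) (j - 1) + ∑ k ∈ Icc p (n - 1), g (n - 1) k (k - p + j)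
  top_zero : ∀ n, 1 < n → g n n 0 = g (n - 1) (n - 1) 0
  top_pos : ∀ n j, 1 < n → 0 < j → j ≤ n → g n n j = t * g (n - 1) (n - 1) (j - 1)

namespace IsRightMulRecursion

variable {g : ℕ → Coeffs K}

/-- The `row_one` and `mid_pos` formulas for `g (n + 1) 1 1` differ by `t * g n 0 0`. -/
theorem apply_zero_zero (hg : IsRightMulRecursion g t) (ht : t ≠ 0) {n : ℕ} (hn : 1 ≤ n) :
    g n 0 0 = 0 := by
  have h1 := hg.row_one (n + 1) (by omega) 1 le_rfl
  have h2 := hg.mid_pos (n + 1) 1 1 (by omega) one_pos le_rfl (by omega)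
  have hsum : ∑ k ∈ Icc 1 n, g n k (k - 1 + 1) = ∑ k ∈ Icc 1 n, g n k k :=
    sum_congr rfl fun k hk => by rw [mem_Icc] at hk; rw [Nat.sub_add_cancel hk.1]
  simp only [Nat.add_sub_cancel, Nat.sub_self, hsum] at h1 h2
  rw [h1, right_eq_add] at h2
  exact (mul_eq_zero.mp h2).resolve_left ht

theorem succ_eq_mulRight (hg : IsRightMulRecursion g t) (ht : t ≠ 0) {n p j : ℕ} (hn : 1 ≤ n)
    (hp : 0 < p) (hj : j ≤ p) (hpn : p ≤ n + 1) :
    g (n + 1) p j = mulRight t n (g n) p j := by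
  rw [mulRight_apply_of_pos t n (g n) hp hj]
  have hlast : Icc (n + 1) n = ∅ := Icc_eq_empty (by omega)
  rcases hpn.lt_or_eq with hpn | rfl
  · split_ifs with hj0
    · subst hj0
      obtain rfl | hp1 := eq_or_lt_of_le (Nat.succ_le_of_lt hp)
      · rw [hg.apply_zero_zero ht hn, zero_add, hg.row_one (n + 1) (by omega) 0 (by omega),
          Nat.add_sub_cancel]
        exact sum_congr rfl fun k hk => by rw [mem_Icc] at hk; rw [Nat.sub_add_cancel hk.1]
      · simpa using hg.mid_zero (n + 1) p (by omega) hp1 hpn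
    · simpa using hg.mid_pos (n + 1) p j (by omega) (by omega) hj hpn
  · split_ifs with hj0
    · simpa [hj0, hlast] using hg.top_zero (n + 1) (by omega)
    · simpa [hlast] using hg.top_pos (n + 1) j (by omega) (by omega) hj

theorem eq_powCoeffs (hg : IsRightMulRecursion g t) (ht : t ≠ 0) {n p j : ℕ} (hn : 1 ≤ n)
    (hj : j ≤ p) (hpn : p ≤ n) : g n p j = powCoeffs t n p j := by
  have origin {m : ℕ} (hm : 1 ≤ m) : g m 0 0 = powCoeffs t m 0 0 := by
    rw [hg.apply_zero_zero ht hm, powCoeffs_apply_zero_left t hm]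
  induction n, hn using Nat.le_induction generalizing p j with
  | base =>
    interval_cases p
    · obtain rfl : j = 0 := by omega
      exact origin le_rfl
    interval_cases j
    · rw [hg.base_zero]; simp [powCoeffs, mulRight_apply_of_pos]
    · rw [hg.base_one]; simp [powCoeffs, mulRight_apply_of_pos]
  | succ n hn ih =>
    obtain rfl | hp := Nat.eq_zero_or_pos p
    · obtain rfl : j = 0 := by omega
      exact origin (by omega)
    rw [hg.succ_eq_mulRight ht hn hp hj hpn, powCoeffs]
    exact mulRight_congr t n (fun a b hb ha => ih hb ha) hj hpn

end IsRightMulRecursion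

end Field

end NormalOrder

/-- `f n p j θ` are the coefficients of `E^(p-j) D^j` in the normal-order expansion of
`(e^θ D + E)^n` over the algebra with `DE = D + E`, defined via the recursion obtained
by right-multiplication by `(e^θ D + E)`. -/
theorem stmt_8
    (f : ℕ → ℕ → ℕ → ℝ → ℝ)
    (h10 : ∀ θ, f 1 1 0 θ = 1)
    (h11 : ∀ θ, f 1 1 1 θ = Real.exp θ)
    (hp1 : ∀ n θ, 1 < n → ∀ j ≤ 1,
        f n 1 j θ = ∑ k ∈ Finset.Icc 1 (n - 1), f (n - 1) k k θ)
    (hj0 : ∀ n p θ, 1 < n → 1 < p → p < n →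
        f n p 0 θ = f (n - 1) (p - 1) 0 θ + ∑ k ∈ Finset.Icc p (n - 1), f (n - 1) k (k - p + 1) θ)
    (hjpos : ∀ n p j θ, 1 < n → 0 < j → j ≤ p → p < n →
        f n p j θ = Real.exp θ * f (n - 1) (p - 1) (j - 1) θ
          + ∑ k ∈ Finset.Icc p (n - 1), f (n - 1) k (k - p + j) θ)
    (hn0 : ∀ n θ, 1 < n → f n n 0 θ = f (n - 1) (n - 1) 0 θ)
    (hnj : ∀ n j θ, 1 < n → 0 < j → j ≤ n →
        f n n j θ = Real.exp θ * f (n - 1) (n - 1) (j - 1) θ) :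
    ∀ n p j : ℕ, ∀ θ : ℝ, 1 ≤ n → 1 ≤ p → p ≤ n → j ≤ p →
      f n p j θ = Real.exp (n * θ) * f n p (p - j) (-θ) := by
  have hrec (θ : ℝ) : NormalOrder.IsRightMulRecursion (fun n p j => f n p j θ) (Real.exp θ) :=
    ⟨h10 θ, h11 θ, fun n => hp1 n θ, fun n p => hj0 n p θ, fun n p j => hjpos n p j θ,
      fun n => hn0 n θ, fun n j => hnj n j θ⟩
  intro n p j θ hn _ hpn hjp
  rw [(hrec θ).eq_powCoeffs (Real.exp_ne_zero θ) hn hjp hpn,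
    (hrec (-θ)).eq_powCoeffs (Real.exp_ne_zero _) hn (Nat.sub_le p j) hpn,
    NormalOrder.powCoeffs_symm (Real.exp_ne_zero θ) n hjp, Real.exp_neg, Real.exp_nat_mul]
end

section
/- Let 0 < c < 1/4, λ₁ = (1-2c+√(1-4c))/(2c), λ₂ = (1-2c-√(1-4c))/(2c), 0 < α < 1, w_k = (1/α-1)^{k-1}, v_k = (λ₁^k - λ₂^k)/(λ₁-λ₂), and D the bidiagonal matrix with D(i,j) = 1 iff j ∈ {i, i+1}. Then for all p ≥ 0, assuming α - λᵢ(1-α) ≠ 0 for i = 1,2, wᵀ D^p v = (1+λ₁)^p · (α/(λ₁-λ₂)) · [ λ₁/(α - λ₁(1-α)) − ((1+λ₂)/(1+λ₁))^p · λ₂/(α - λ₂(1-α)) ]. -/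
/-!
Indices are shifted by one (Lean's `k` is the paper's `k + 1`). Both `w` and `v` are combinations of geometric sequences: `w_k = q^k` with `q = 1/α - 1`, and
`v_k = (λ₁ λ₁^k - λ₂ λ₂^k)/(λ₁ - λ₂)`. The shift-sum operator `D` maps `λ^k` to `(1 + λ) λ^k`, so
`D^p v` is again such a combination, and `wᵀ D^p v` is a difference of two geometric series with
ratios `q λ₁` and `q λ₂`, both in `[0, 1)` since `0 < λ₂ < λ₁` and `q λ₁ < 1`.
-/

lemma quadratic_roots_pos_lt {c : ℝ} (hc0 : 0 < c) (hc : c < 1 / 4) :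
    0 < (1 - 2 * c - Real.sqrt (1 - 4 * c)) / (2 * c) ∧
      (1 - 2 * c - Real.sqrt (1 - 4 * c)) / (2 * c) <
        (1 - 2 * c + Real.sqrt (1 - 4 * c)) / (2 * c) := by
  have h4c : 0 < 1 - 4 * c := by linarith
  have hs0 : 0 < Real.sqrt (1 - 4 * c) := Real.sqrt_pos.mpr h4c
  have hs1 : Real.sqrt (1 - 4 * c) < 1 - 2 * c := by
    rw [Real.sqrt_lt' (by linarith)]
    nlinarith
  constructor
  · exact div_pos (by linarith) (by linarith)
  · gcongr
    linarith

lemma iterate_shiftAdd_apply_sub_geometric {Dop : (ℕ → ℝ) → ℕ → ℝ}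
    (hD : ∀ x k, Dop x k = x k + x (k + 1)) (a b l₁ l₂ : ℝ) (n k : ℕ) :
    Dop^[n] (fun j => a * l₁ ^ j - b * l₂ ^ j) k =
      a * (1 + l₁) ^ n * l₁ ^ k - b * (1 + l₂) ^ n * l₂ ^ k := by
  induction n generalizing k with
  | zero => simp
  | succ n ih =>
    rw [Function.iterate_succ_apply', hD, ih, ih]
    ring

lemma tsum_pow_mul_sub_geometric {r a b l₁ l₂ : ℝ} (h₁ : |r * l₁| < 1) (h₂ : |r * l₂| < 1) :
    ∑' k : ℕ, r ^ k * (a * l₁ ^ k - b * l₂ ^ k) = a / (1 - r * l₁) - b / (1 - r * l₂) := by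
  have hterm : ∀ k : ℕ, r ^ k * (a * l₁ ^ k - b * l₂ ^ k) = a * (r * l₁) ^ k - b * (r * l₂) ^ k :=
    fun k => by ring
  rw [tsum_congr hterm,
    ((summable_geometric_of_abs_lt_one h₁).mul_left a).tsum_sub
      ((summable_geometric_of_abs_lt_one h₂).mul_left b),
    tsum_mul_left, tsum_mul_left, tsum_geometric_of_abs_lt_one h₁,
    tsum_geometric_of_abs_lt_one h₂, div_eq_mul_inv, div_eq_mul_inv]

theorem stmt_11_general
    (c : ℝ) (hc0 : 0 < c) (hc : c < 1 / 4)
    (lam1 lam2 : ℝ)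
    (h1 : lam1 = (1 - 2 * c + Real.sqrt (1 - 4 * c)) / (2 * c))
    (h2 : lam2 = (1 - 2 * c - Real.sqrt (1 - 4 * c)) / (2 * c))
    (α : ℝ) (hα0 : 0 < α) (hα1 : α < 1)
    (w : ℕ → ℝ) (hw : ∀ k : ℕ, w k = (1 / α - 1) ^ k)
    (v : ℕ → ℝ) (hv : ∀ k : ℕ, v k = (lam1 ^ (k + 1) - lam2 ^ (k + 1)) / (lam1 - lam2))
    (Dop : (ℕ → ℝ) → (ℕ → ℝ)) (hD : ∀ x k, Dop x k = x k + x (k + 1))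
    (hconv : lam1 * (1 - α) < α) :
    ∀ p : ℕ,
      ∑' k : ℕ, w k * (Dop^[p] v) k =
        (1 + lam1) ^ p * (α / (lam1 - lam2)) *
          (lam1 / (α - lam1 * (1 - α)) -
            ((1 + lam2) / (1 + lam1)) ^ p * lam2 / (α - lam2 * (1 - α))) := by
  intro p
  obtain ⟨hl2, hl12⟩ : 0 < lam2 ∧ lam2 < lam1 := h1 ▸ h2 ▸ quadratic_roots_pos_lt hc0 hc
  have hl1 : 0 < lam1 := hl2.trans hl12
  have hl12' : lam1 - lam2 ≠ 0 := sub_ne_zero.mpr hl12.ne'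
  set q := 1 / α - 1 with hq
  have hq' : q = (1 - α) / α := by rw [hq]; field_simp
  have hq0 : 0 ≤ q := by rw [hq']; exact div_nonneg (by linarith) hα0.le
  have hr₁ : |q * lam1| < 1 := by
    rw [abs_of_nonneg (mul_nonneg hq0 hl1.le), hq', div_mul_eq_mul_div, div_lt_one hα0]
    linarith
  have hr₂ : |q * lam2| < 1 := by
    rw [abs_of_nonneg (mul_nonneg hq0 hl2.le)]
    exact (mul_le_mul_of_nonneg_left hl12.le hq0).trans_lt (abs_lt.mp hr₁).2
  have hv' : v = fun j => lam1 / (lam1 - lam2) * lam1 ^ j - lam2 / (lam1 - lam2) * lam2 ^ j :=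
    funext fun j => by rw [hv]; field_simp; ring
  have hterm : ∀ k, w k * Dop^[p] v k = q ^ k * (lam1 / (lam1 - lam2) * (1 + lam1) ^ p * lam1 ^ k
      - lam2 / (lam1 - lam2) * (1 + lam2) ^ p * lam2 ^ k) := fun k => by
    rw [hw, hv', iterate_shiftAdd_apply_sub_geometric hD]
  rw [tsum_congr hterm, tsum_pow_mul_sub_geometric hr₁ hr₂]
  have hd₁ : α - lam1 * (1 - α) ≠ 0 := by linarith
  have hd₂ : α - lam2 * (1 - α) ≠ 0 := by nlinarith
  have h1l1 : 1 + lam1 ≠ 0 := by positivity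
  rw [hq', div_pow]
  field_simp

/-- Sequences indexed by `k : ℕ` represent entries `k+1` (positive-integer indexing);
`Dop` is the action of the bidiagonal matrix `D`: `(D x)_k = x_k + x_{k+1}`. -/
theorem stmt_11
    (c : ℝ) (hc0 : 0 < c) (hc : c < 1 / 4)
    (lam1 lam2 : ℝ)
    (h1 : lam1 = (1 - 2 * c + Real.sqrt (1 - 4 * c)) / (2 * c))
    (h2 : lam2 = (1 - 2 * c - Real.sqrt (1 - 4 * c)) / (2 * c))
    (α : ℝ) (hα0 : 0 < α) (hα1 : α < 1)
    (w : ℕ → ℝ) (hw : ∀ k : ℕ, w k = (1 / α - 1) ^ k)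
    (v : ℕ → ℝ) (hv : ∀ k : ℕ, v k = (lam1 ^ (k + 1) - lam2 ^ (k + 1)) / (lam1 - lam2))
    (Dop : (ℕ → ℝ) → (ℕ → ℝ)) (hD : ∀ x k, Dop x k = x k + x (k + 1))
    (hconv : lam1 * (1 - α) < α)
    (hne1 : α - lam1 * (1 - α) ≠ 0) (hne2 : α - lam2 * (1 - α) ≠ 0) :
    ∀ p : ℕ,
      ∑' k : ℕ, w k * (Dop^[p] v) k =
        (1 + lam1) ^ p * (α / (lam1 - lam2)) *
          (lam1 / (α - lam1 * (1 - α)) -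
            ((1 + lam2) / (1 + lam1)) ^ p * lam2 / (α - lam2 * (1 - α))) :=
  stmt_11_general c hc0 hc lam1 lam2 h1 h2 α hα0 hα1 w hw v hv Dop hD hconv
end

section
/- For fixed λ₁ > 0, the function F(ε, δ) = -(ε-δ)log(ε-δ) + (1-δ)log(1-δ) + δ log(1+λ₁) on 0 < δ ≤ ε (with 0 log 0 = 0), maximized over δ for fixed ε ∈ (0,1], attains its maximum at δ = 0 if ε ≤ 1/(1+λ₁), and at δ = ((1+λ₁)ε − 1)/λ₁ if ε > 1/(1+λ₁). -/
/-!
For fixed `ε`, put `a = ε - δ` and `b = 1 - ε`, so that `a + b = 1 - δ`. Then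
`F ε δ = [(a + b) log (a + b) - a log a - b log b] + b log b + δ log (1 + λ₁)`, and by Gibbs'
inequality the bracket is at most `-a log p - b log q` for every probability vector `(p, q)`.
Choosing `(p, q) = (ε, 1 - ε)` gives a bound that is affine in `δ` with slope
`log (ε (1 + λ₁)) ≤ 0` when `ε ≤ 1 / (1 + λ₁)`, and equal to `F ε 0` at `δ = 0`. Choosing
`(p, q) = (1, λ₁) / (1 + λ₁)` gives a bound independent of `δ`, attained at the critical point
`δ = ((1 + λ₁) ε - 1) / λ₁`, where `a / (a + b) = 1 / (1 + λ₁)`.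
-/

open Real

lemma sub_le_mul_log_sub_log {t q : ℝ} (ht : 0 ≤ t) (hq : 0 < q) :
    t - q ≤ t * (log t - log q) := by
  rcases ht.eq_or_lt with rfl | ht
  · simpa using hq.le
  · have h := log_le_sub_one_of_pos (div_pos hq ht)
    rw [log_div hq.ne' ht.ne'] at h
    have key : t * (q / t - 1) = q - t := by field_simp
    nlinarith [mul_le_mul_of_nonneg_left h ht.le]

lemma gibbs_inequality_two_point {a b p q : ℝ} (ha : 0 ≤ a) (hb : 0 ≤ b) (hp : 0 < p)
    (hq : 0 < q) (hpq : p + q = 1) :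
    (a + b) * log (a + b) - a * log a - b * log b ≤ -(a * log p) - b * log q := by
  rcases (add_nonneg ha hb).eq_or_lt with hs | hs
  · obtain ⟨rfl, rfl⟩ : a = 0 ∧ b = 0 := ⟨by linarith, by linarith⟩
    simp
  · obtain rfl : q = 1 - p := by linarith
    have h₁ := sub_le_mul_log_sub_log ha (mul_pos hp hs)
    have h₂ := sub_le_mul_log_sub_log hb (mul_pos hq hs)
    rw [log_mul hp.ne' hs.ne'] at h₁
    rw [log_mul hq.ne' hs.ne'] at h₂
    linear_combination h₁ + h₂

lemma objective_at_critical_point {lam ε : ℝ} (hlam : 0 < lam) (hε1 : ε ≤ 1) :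
    -((ε - ((1 + lam) * ε - 1) / lam) * log (ε - ((1 + lam) * ε - 1) / lam)) +
        (1 - ((1 + lam) * ε - 1) / lam) * log (1 - ((1 + lam) * ε - 1) / lam) +
        ((1 + lam) * ε - 1) / lam * log (1 + lam) =
      log (1 + lam) + (1 - ε) * log (1 - ε) - (1 - ε) * log lam := by
  rcases hε1.eq_or_lt with rfl | hε1
  · simp [div_self hlam.ne']
  · have hb : 0 < 1 - ε := by linarith
    have hL : 0 < 1 + lam := by linarith
    have h₁ : ε - ((1 + lam) * ε - 1) / lam = (1 - ε) / lam := by field_simp; ring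
    have h₂ : 1 - ((1 + lam) * ε - 1) / lam = (1 + lam) * (1 - ε) / lam := by field_simp; ring
    rw [h₁, h₂, log_div hb.ne' hlam.ne', log_div (by positivity) hlam.ne',
      log_mul hL.ne' hb.ne']
    field_simp
    ring

/-- Note `Real.log 0 = 0` in Mathlib, encoding the convention `0 · log 0 = 0`. -/
theorem stmt_12 (lam1 : ℝ) (hlam : 0 < lam1)
    (F : ℝ → ℝ → ℝ)
    (hF : ∀ ε δ : ℝ, F ε δ =
      -((ε - δ) * Real.log (ε - δ)) + (1 - δ) * Real.log (1 - δ) + δ * Real.log (1 + lam1)) :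
    ∀ ε : ℝ, 0 < ε → ε ≤ 1 →
      ((ε ≤ 1 / (1 + lam1) → ∀ δ : ℝ, 0 ≤ δ → δ ≤ ε → F ε δ ≤ F ε 0) ∧
        (1 / (1 + lam1) < ε → ∀ δ : ℝ, 0 ≤ δ → δ ≤ ε →
          F ε δ ≤ F ε (((1 + lam1) * ε - 1) / lam1))) := by
  intro ε hε hε1
  have hL : 0 < 1 + lam1 := by linarith
  have gibbs : ∀ δ p q, δ ≤ ε → 0 < p → 0 < q → p + q = 1 → F ε δ ≤
      -((ε - δ) * log p) - (1 - ε) * log q + (1 - ε) * log (1 - ε) + δ * log (1 + lam1) := by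
    intro δ p q hδε hp hq hpq
    have h := gibbs_inequality_two_point (sub_nonneg.2 hδε) (sub_nonneg.2 hε1) hp hq hpq
    rw [show ε - δ + (1 - ε) = 1 - δ by ring] at h
    rw [hF]
    linarith
  refine ⟨fun hcase δ hδ0 hδε => ?_, fun _ δ _ hδε => ?_⟩
  · have hεL : ε * (1 + lam1) ≤ 1 := by rwa [le_div_iff₀ hL] at hcase
    have hslope : log (ε * (1 + lam1)) ≤ 0 := log_nonpos (by positivity) hεL
    calc F ε δ ≤ -((ε - δ) * log ε) - (1 - ε) * log (1 - ε) + (1 - ε) * log (1 - ε) +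
          δ * log (1 + lam1) := gibbs δ ε (1 - ε) hδε hε (by nlinarith) (by ring)
      _ = -(ε * log ε) + δ * log (ε * (1 + lam1)) := by rw [log_mul hε.ne' hL.ne']; ring
      _ ≤ -(ε * log ε) := by nlinarith [mul_nonpos_of_nonneg_of_nonpos hδ0 hslope]
      _ = F ε 0 := by simp [hF]
  · calc F ε δ ≤ -((ε - δ) * log (1 / (1 + lam1))) - (1 - ε) * log (lam1 / (1 + lam1)) +
          (1 - ε) * log (1 - ε) + δ * log (1 + lam1) :=
          gibbs δ _ _ hδε (by positivity) (by positivity) (by field_simp)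
      _ = log (1 + lam1) + (1 - ε) * log (1 - ε) - (1 - ε) * log lam1 := by
          rw [one_div, log_inv, log_div hlam.ne' hL.ne']; ring
      _ = F ε (((1 + lam1) * ε - 1) / lam1) := by
          rw [hF, objective_at_critical_point hlam hε1]
end

section
/- Let λ₁ ≥ 1 and θ ∈ ℝ. The supremum over ε ∈ (0,1] of the maximum of G₁(ε) = εθ − 2ε log ε − 2(1-ε)log(1-ε) on (0, 1/(1+λ₁)] and G₂(ε) = εθ − ε log ε − (1-ε)log(λ₁(1-ε)) + log(1+λ₁) on (1/(1+λ₁), 1] equals 2 log(1 + e^{θ/2}) if θ ≤ −2 log λ₁, and equals log(1 + λ₁ e^θ) + log(1 + 1/λ₁) if θ > −2 log λ₁. -/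
/-!
Write `h` for the binary entropy and `σ` for the logistic function. Then
`G₁ ε = 2 (θ/2 · ε + h ε)` and `G₂ ε = (θ + log λ₁) ε + h ε + log (1 + 1/λ₁)`, and the Gibbs
variational formula `max_{x ∈ [0,1]} (a x + h x) = log (1 + e^a)`, attained at `σ a`, gives
the unconstrained maximum of each piece. The two pieces agree to first order at the breakpoint
`1/(1+λ₁) = σ (-log λ₁)`, where both have slope `θ + 2 log λ₁`. So the piecewise function is
concave, and its maximum is that of the piece whose maximiser, `σ (θ/2)` or `σ (θ + log λ₁)`,
lies on its own side of the breakpoint; the sign of `θ + 2 log λ₁` decides which one it is.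
-/

open Real Set

theorem ConcaveOn.le_add_mul_sub_of_hasDerivAt {S : Set ℝ} {f : ℝ → ℝ} {x y f' : ℝ}
    (hf : ConcaveOn ℝ S f) (hx : x ∈ S) (hy : y ∈ S) (hf' : HasDerivAt f f' x) :
    f y ≤ f x + f' * (y - x) := by
  rcases lt_trichotomy y x with hyx | rfl | hxy
  · have := hf.le_slope_of_hasDerivAt hy hx hyx hf'
    rw [slope_def_field, le_div_iff₀ (sub_pos.2 hyx)] at this
    linarith
  · simp
  · have := hf.slope_le_of_hasDerivAt hx hy hxy hf'
    rw [slope_def_field, div_le_iff₀ (sub_pos.2 hxy)] at this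
    linarith

namespace Real

lemma mul_log_mul_left {c : ℝ} (hc : c ≠ 0) (x : ℝ) :
    x * log (c * x) = x * log c + x * log x := by
  rcases eq_or_ne x 0 with rfl | hx
  · simp
  · rw [log_mul hc hx]; ring

lemma binEntropy_eq_neg_mul_log_sub (p : ℝ) :
    binEntropy p = -(p * log p) - (1 - p) * log (1 - p) := by
  simp only [binEntropy, log_inv]; ring

lemma sigmoid_eq_exp_div (a : ℝ) : sigmoid a = exp a / (1 + exp a) := by
  rw [sigmoid_def, exp_neg]; field_simp; ring

lemma one_sub_sigmoid (a : ℝ) : 1 - sigmoid a = (1 + exp a)⁻¹ := by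
  rw [sigmoid_eq_exp_div]; field_simp; ring

lemma log_sigmoid (a : ℝ) : log (sigmoid a) = a - log (1 + exp a) := by
  rw [sigmoid_eq_exp_div, log_div (exp_pos a).ne' (by positivity), log_exp]

lemma log_one_sub_sigmoid (a : ℝ) : log (1 - sigmoid a) = -log (1 + exp a) := by
  rw [one_sub_sigmoid, log_inv]

lemma sigmoid_neg_log {lam : ℝ} (hlam : 0 < lam) : sigmoid (-log lam) = (1 + lam)⁻¹ := by
  rw [sigmoid_def, neg_neg, exp_log hlam]

lemma binEntropy_sigmoid (a : ℝ) :
    binEntropy (sigmoid a) = log (1 + exp a) - a * sigmoid a := by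
  rw [binEntropy_eq_neg_mul_log_sub, log_sigmoid, log_one_sub_sigmoid]; ring

lemma binEntropy_le_of_sigmoid (a : ℝ) {x : ℝ} (hx : x ∈ Icc 0 1) :
    binEntropy x ≤ binEntropy (sigmoid a) - a * (x - sigmoid a) := by
  have hderiv : HasDerivAt binEntropy (-a) (sigmoid a) := by
    convert hasDerivAt_binEntropy (sigmoid_pos a).ne' (sigmoid_lt_one a).ne using 1
    rw [log_sigmoid, log_one_sub_sigmoid]; ring
  have := strictConcave_binEntropy.concaveOn.le_add_mul_sub_of_hasDerivAt
    ⟨(sigmoid_pos a).le, (sigmoid_lt_one a).le⟩ hx hderiv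
  linarith

lemma mul_add_binEntropy_le (a : ℝ) {x : ℝ} (hx : x ∈ Icc 0 1) :
    a * x + binEntropy x ≤ log (1 + exp a) := by
  have := binEntropy_le_of_sigmoid a hx
  rw [binEntropy_sigmoid] at this
  linarith

end Real

section breakpoint

variable {lam θ : ℝ} {G1 G2 : ℝ → ℝ}

lemma binEntropy_sigmoid_neg_log (hlam : 0 < lam) :
    binEntropy (sigmoid (-log lam)) = log (1 + lam⁻¹) + log lam * sigmoid (-log lam) := by
  rw [binEntropy_sigmoid, exp_neg, exp_log hlam]; ring

lemma isGreatest_of_le_neg_two_mul_log (hlam : 0 < lam) (hθ : θ ≤ -2 * log lam)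
    (hG1 : ∀ ε, G1 ε = θ * ε + 2 * binEntropy ε)
    (hG2 : ∀ ε, G2 ε = (θ + log lam) * ε + binEntropy ε + log (1 + lam⁻¹)) :
    IsGreatest (G1 '' Ioc 0 (sigmoid (-log lam)) ∪ G2 '' Ioc (sigmoid (-log lam)) 1)
      (2 * log (1 + exp (θ / 2))) := by
  set p₀ := sigmoid (-log lam)
  have hG1_le : ∀ ε ∈ Icc 0 1, G1 ε ≤ 2 * log (1 + exp (θ / 2)) := fun ε hε => by
    have := mul_add_binEntropy_le (θ / 2) hε
    rw [hG1]; linarith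
  refine ⟨Or.inl ⟨sigmoid (θ / 2), ⟨sigmoid_pos _, sigmoid_le (by linarith)⟩, ?_⟩, ?_⟩
  · rw [hG1, binEntropy_sigmoid]; ring
  rintro _ (⟨ε, hε, rfl⟩ | ⟨ε, ⟨hp₀ε, hε1⟩, rfl⟩)
  · exact hG1_le ε ⟨hε.1.le, hε.2.trans (sigmoid_le_one _)⟩
  have hp₀ := binEntropy_sigmoid_neg_log hlam
  calc G2 ε ≤ G1 p₀ + (θ + 2 * log lam) * (ε - p₀) := by
        have := binEntropy_le_of_sigmoid (-log lam) ⟨(sigmoid_pos _).le.trans hp₀ε.le, hε1⟩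
        rw [hG1, hG2]; linarith
    _ ≤ G1 p₀ := add_le_of_nonpos_right <|
        mul_nonpos_of_nonpos_of_nonneg (by linarith) (sub_nonneg.2 hp₀ε.le)
    _ ≤ 2 * log (1 + exp (θ / 2)) := hG1_le p₀ ⟨(sigmoid_pos _).le, sigmoid_le_one _⟩

lemma isGreatest_of_neg_two_mul_log_lt (hlam : 0 < lam) (hθ : -2 * log lam < θ)
    (hG1 : ∀ ε, G1 ε = θ * ε + 2 * binEntropy ε)
    (hG2 : ∀ ε, G2 ε = (θ + log lam) * ε + binEntropy ε + log (1 + lam⁻¹)) :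
    IsGreatest (G1 '' Ioc 0 (sigmoid (-log lam)) ∪ G2 '' Ioc (sigmoid (-log lam)) 1)
      (log (1 + lam * exp θ) + log (1 + lam⁻¹)) := by
  set p₀ := sigmoid (-log lam)
  have hexp : exp (θ + log lam) = lam * exp θ := by rw [exp_add, exp_log hlam, mul_comm]
  have hG2_le : ∀ ε ∈ Icc 0 1, G2 ε ≤ log (1 + lam * exp θ) + log (1 + lam⁻¹) := by
    intro ε hε
    have := mul_add_binEntropy_le (θ + log lam) hε
    rw [hG2, ← hexp]; linarith
  refine ⟨Or.inr ⟨sigmoid (θ + log lam), ⟨sigmoid_lt (by linarith), sigmoid_le_one _⟩, ?_⟩,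
    ?_⟩
  · rw [hG2, binEntropy_sigmoid, hexp]; ring
  rintro _ (⟨ε, ⟨hε0, hεp₀⟩, rfl⟩ | ⟨ε, hε, rfl⟩)
  · have hp₀ := binEntropy_sigmoid_neg_log hlam
    calc G1 ε ≤ G2 p₀ + (θ + 2 * log lam) * (ε - p₀) := by
          have := binEntropy_le_of_sigmoid (-log lam)
            ⟨hε0.le, hεp₀.trans (sigmoid_le_one _)⟩
          rw [hG1, hG2]; linarith
      _ ≤ G2 p₀ := add_le_of_nonpos_right <|
          mul_nonpos_of_nonneg_of_nonpos (by linarith) (sub_nonpos.2 hεp₀)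
      _ ≤ log (1 + lam * exp θ) + log (1 + lam⁻¹) :=
          hG2_le p₀ ⟨(sigmoid_pos _).le, sigmoid_le_one _⟩
  · exact hG2_le ε ⟨(sigmoid_pos _).le.trans hε.1.le, hε.2⟩

end breakpoint

open Real in
/-- Note `Real.log 0 = 0` in Mathlib, encoding the convention `0 · log 0 = 0`. -/
theorem stmt_13 (lam1 θ : ℝ) (hlam : 1 ≤ lam1)
    (G1 G2 : ℝ → ℝ)
    (hG1 : ∀ ε : ℝ, G1 ε = ε * θ - 2 * ε * log ε - 2 * (1 - ε) * log (1 - ε))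
    (hG2 : ∀ ε : ℝ, G2 ε = ε * θ - ε * log ε - (1 - ε) * log (lam1 * (1 - ε)) + log (1 + lam1)) :
    sSup (G1 '' Set.Ioc 0 (1 / (1 + lam1)) ∪ G2 '' Set.Ioc (1 / (1 + lam1)) 1) =
      if θ ≤ -2 * log lam1 then 2 * log (1 + exp (θ / 2))
      else log (1 + lam1 * exp θ) + log (1 + 1 / lam1) := by
  have hlam0 : 0 < lam1 := by linarith
  have hG1' : ∀ ε, G1 ε = θ * ε + 2 * binEntropy ε := fun ε => by
    rw [hG1, binEntropy_eq_neg_mul_log_sub]; ring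
  have hG2' : ∀ ε, G2 ε = (θ + log lam1) * ε + binEntropy ε + log (1 + lam1⁻¹) := by
    intro ε
    have hsplit : log (1 + lam1) = log lam1 + log (1 + lam1⁻¹) := by
      rw [← log_mul hlam0.ne' (by positivity), mul_add, mul_inv_cancel₀ hlam0.ne', mul_one,
        add_comm]
    rw [hG2, mul_log_mul_left hlam0.ne', hsplit, binEntropy_eq_neg_mul_log_sub]; ring
  simp only [one_div, ← sigmoid_neg_log hlam0]
  split_ifs with hθ
  · exact (isGreatest_of_le_neg_two_mul_log hlam0 hθ hG1' hG2').csSup_eq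
  · exact (isGreatest_of_neg_two_mul_log_lt hlam0 (not_le.1 hθ) hG1' hG2').csSup_eq
end

section
/- Let 0 < α < 1 with (1/α − 1)² < 1/λ₁² for λ₁ ≥ 1. For fixed θ ∈ ℝ define h(s) = log[1 + √s + e^θ(1 + 1/√s)] for s ∈ ((1/α−1)², 1/λ₁²). Then inf_s h(s) equals: log(e^θ/(1−α) + 1/α) if θ ≤ 2 log(1/α − 1); log(1 + e^{θ/2})² if 2 log(1/α−1) < θ ≤ −2 log λ₁; and log(1 + λ₁ e^θ) + log(1 + 1/λ₁) if θ > −2 log λ₁. -/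
/-!
With `t = √s` and `c = exp θ`, the argument of the logarithm is `1 + c + (t + c / t)`, and
`t + c / t` decreases on `(0, √c]` and increases on `[√c, ∞)`. Hence on the window
`a = 1/α - 1 < t < b = 1/λ₁` the infimum is the value at the point of `[a, b]` nearest to
`√c = exp (θ / 2)`, by continuity of the objective on `[a, b]`.
-/

open Real Set

theorem sInf_image_Ioo_eq_of_isMinOn {α β : Type*} [ConditionallyCompleteLinearOrder α]
    [TopologicalSpace α] [OrderTopology α] [DenselyOrdered α]
    [ConditionallyCompleteLinearOrder β] [TopologicalSpace β] [OrderTopology β]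
    {f : α → β} {a b m : α} (hab : a < b) (hf : ContinuousOn f (Icc a b))
    (hm : m ∈ Icc a b) (hmin : IsMinOn f (Icc a b) m) :
    sInf (f '' Ioo a b) = f m := by
  refine (isGLB_of_mem_closure ?_ ?_).csInf_eq ((nonempty_Ioo.2 hab).image f)
  · rintro _ ⟨t, ht, rfl⟩
    exact hmin (Ioo_subset_Icc_self ht)
  · rw [← closure_Ioo hab.ne] at hf hm
    exact hf.image_closure (mem_image_of_mem f hm)

theorem Real.sqrt_image_Ioo_sq {a b : ℝ} (ha : 0 ≤ a) (hb : 0 ≤ b) :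
    sqrt '' Ioo (a ^ 2) (b ^ 2) = Ioo a b := by
  ext t
  constructor
  · rintro ⟨s, ⟨has, hsb⟩, rfl⟩
    have hs : 0 ≤ s := (sq_nonneg a).trans has.le
    exact ⟨(lt_sqrt ha).2 has, (sqrt_lt hs hb).2 hsb⟩
  · rintro ⟨hat, htb⟩
    have ht : 0 ≤ t := ha.trans hat.le
    exact ⟨t ^ 2, ⟨pow_lt_pow_left₀ hat ha two_ne_zero, pow_lt_pow_left₀ htb ht two_ne_zero⟩,
      sqrt_sq ht⟩

section AddDiv

variable {a b c m t : ℝ}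

theorem add_div_le_add_div_of_nonneg_mul (hm : 0 < m) (ht : 0 < t)
    (h : 0 ≤ (t - m) * (t * m - c)) : m + c / m ≤ t + c / t := by
  have key : t + c / t - (m + c / m) = (t - m) * (t * m - c) / (t * m) := by
    field_simp; ring
  have : 0 ≤ (t - m) * (t * m - c) / (t * m) := by positivity
  linarith

theorem isMinOn_add_div_Ici (ha : 0 < a) (hc : c ≤ a ^ 2) :
    IsMinOn (fun t => t + c / t) (Ici a) a := fun t (hat : a ≤ t) =>
  add_div_le_add_div_of_nonneg_mul ha (ha.trans_le hat)
    (mul_nonneg (sub_nonneg.2 hat) (by nlinarith))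

theorem isMinOn_add_sq_div (hm : 0 < m) :
    IsMinOn (fun t => t + m ^ 2 / t) (Ioi 0) m := fun t (ht : 0 < t) =>
  add_div_le_add_div_of_nonneg_mul hm ht (by nlinarith [mul_nonneg hm.le (sq_nonneg (t - m))])

theorem isMinOn_add_div_Ioc (hb : 0 < b) (hc : b ^ 2 ≤ c) :
    IsMinOn (fun t => t + c / t) (Ioc 0 b) b := fun t (ht : 0 < t ∧ t ≤ b) =>
  add_div_le_add_div_of_nonneg_mul hb ht.1
    (mul_nonneg_of_nonpos_of_nonpos (sub_nonpos.2 ht.2) (by nlinarith))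

theorem isMinOn_log_add_mul_add_one_div (hc : 0 ≤ c) {S : Set ℝ} (hS : S ⊆ Ioi 0)
    (hmS : m ∈ S) (hmin : IsMinOn (fun t => t + c / t) S m) :
    IsMinOn (fun t => log (1 + t + c * (1 + 1 / t))) S m := by
  intro t ht
  have hm : 0 < m := hS hmS
  have ht0 : 0 < t := hS ht
  have hle : m + c / m ≤ t + c / t := hmin ht
  refine log_le_log (by positivity) ?_
  simp only [mul_add, mul_one, mul_one_div]
  linarith

theorem sInf_log_add_sqrt_eq (hc : 0 ≤ c) (ha : 0 < a) (hab : a < b) (hm : m ∈ Icc a b)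
    (hmin : IsMinOn (fun t => t + c / t) (Icc a b) m) :
    sInf ((fun s => log (1 + √s + c * (1 + 1 / √s))) '' Ioo (a ^ 2) (b ^ 2)) =
      log (1 + m + c * (1 + 1 / m)) := by
  have hpos : Icc a b ⊆ Ioi 0 := fun t ht => ha.trans_le ht.1
  rw [show (fun s => log (1 + √s + c * (1 + 1 / √s))) =
      (fun t => log (1 + t + c * (1 + 1 / t))) ∘ sqrt from rfl, image_comp,
    sqrt_image_Ioo_sq ha.le (ha.trans hab).le]
  refine sInf_image_Ioo_eq_of_isMinOn hab ?_ hm (isMinOn_log_add_mul_add_one_div hc hpos hm hmin)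
  refine ContinuousOn.log (by fun_prop (disch := exact fun t ht => (hpos ht).ne')) fun t ht => ?_
  have : 0 < t := hpos ht
  positivity

end AddDiv

theorem Real.exp_half_le_iff {θ a : ℝ} (ha : 0 < a) : exp (θ / 2) ≤ a ↔ θ ≤ 2 * log a := by
  rw [← le_log_iff_exp_le ha]
  constructor <;> intro h <;> linarith

open Real in
theorem stmt_14 (α lam1 θ : ℝ) (hα0 : 0 < α) (hα1 : α < 1) (hlam : 1 ≤ lam1)
    (hwin : (1 / α - 1) ^ 2 < 1 / lam1 ^ 2)
    (h : ℝ → ℝ)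
    (hh : ∀ s : ℝ, h s = log (1 + sqrt s + exp θ * (1 + 1 / sqrt s))) :
    sInf (h '' Set.Ioo ((1 / α - 1) ^ 2) (1 / lam1 ^ 2)) =
      if θ ≤ 2 * log (1 / α - 1) then log (exp θ / (1 - α) + 1 / α)
      else if θ ≤ -2 * log lam1 then log ((1 + exp (θ / 2)) ^ 2)
      else log (1 + lam1 * exp θ) + log (1 + 1 / lam1) := by
  set a := 1 / α - 1
  set u := exp (θ / 2)
  have ha : 0 < a := by simpa [a] using one_lt_one_div hα0 hα1
  have hlam0 : 0 < lam1 := one_pos.trans_le hlam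
  have hb : 0 < 1 / lam1 := by positivity
  have hwin_sq : a ^ 2 < (1 / lam1) ^ 2 := by rwa [one_div_pow]
  have hab : a < 1 / lam1 := (pow_lt_pow_iff_left₀ ha.le hb.le two_ne_zero).1 hwin_sq
  have hu : 0 < u := exp_pos _
  have hexp : exp θ = u ^ 2 := by rw [← exp_nat_mul]; congr 1; push_cast; ring
  have hlog : -2 * log lam1 = 2 * log (1 / lam1) := by rw [one_div, log_inv]; ring
  rw [funext hh, ← one_div_pow, hexp, hlog]
  split_ifs with hθa hθb
  · have hua : u ≤ a := (exp_half_le_iff ha).2 hθa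
    rw [sInf_log_add_sqrt_eq (sq_nonneg u) ha hab ⟨le_rfl, hab.le⟩
      ((isMinOn_add_div_Ici ha (pow_le_pow_left₀ hu.le hua 2)).on_subset Icc_subset_Ici_self)]
    have : 1 - α ≠ 0 := sub_ne_zero.2 hα1.ne'
    congr 1
    simp only [a]
    field_simp
    ring
  · have hau : a < u := not_le.1 ((exp_half_le_iff ha).not.2 hθa)
    have hub : u ≤ 1 / lam1 := (exp_half_le_iff hb).2 hθb
    rw [sInf_log_add_sqrt_eq (sq_nonneg u) ha hab ⟨hau.le, hub⟩
      ((isMinOn_add_sq_div hu).on_subset fun t ht => ha.trans_le ht.1)]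
    congr 1
    field_simp
    ring
  · have hbu : 1 / lam1 < u := not_le.1 ((exp_half_le_iff hb).not.2 hθb)
    rw [sInf_log_add_sqrt_eq (sq_nonneg u) ha hab ⟨hab.le, le_rfl⟩
      ((isMinOn_add_div_Ioc hb (pow_le_pow_left₀ hb.le hbu.le 2)).on_subset
        fun t ht => ⟨ha.trans_le ht.1, ht.2⟩), ← log_mul (by positivity) (by positivity)]
    congr 1
    field_simp
    ring
end

section
/- Let 1/2 < α < 1, c = 1/4, and Λ(θ) = log(e^θ/(1−α) + 1/α) + log c for θ ≤ 2 log(1/α−1), Λ(θ) = 2 log(1+e^{θ/2}) + log c for 2 log(1/α−1) < θ ≤ 0, and Λ(θ) = log(1+e^θ) + log 2 + log c for θ > 0. Then the Legendre transform I(z) = sup_{θ∈ℝ} (zθ − Λ(θ)) satisfies, for z ∈ (0,1): I(z) = z log(z/α) + (1−z) log((1−z)/(1−α)) + log(4α(1−α)) if 0 < z ≤ 1−α; I(z) = 2[z log z + (1−z) log(1−z) + log 2] if 1−α < z ≤ 1/2; and I(z) = z log z + (1−z) log(1−z) + log 2 if 1/2 < z < 1. -/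
/-!
On each of its three pieces, `Λ` is an affine reparametrisation of softplus `log (1 + eˣ)`, and
the Legendre objective `x ↦ z x - log (1 + eˣ)` is maximised at `logit z`, with value
`z log z + (1 - z) log (1 - z)` (convexity of `exp`). Since the objectives of `z` and `w` differ
by `(z - w) x`, the objective of `z` lies below its value at `logit w` plus
`(z - w) (x - logit w)`: it decreases to the right of `logit w` when `z ≤ w` and increases to
its left when `w ≤ z`. With `w = 1 - α` and `w = 1/2`, whose logits are half the break points
of `Λ`, this bounds `zθ - Λ θ` on every piece by its value at the stationary point, which lies in
the first, second or third piece according as `z ≤ 1 - α`, `1 - α < z ≤ 1/2` or `1/2 < z`.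
-/

open Real Set

noncomputable section

def logit (w : ℝ) : ℝ := log (w / (1 - w))

def softplus (x : ℝ) : ℝ := log (1 + exp x)

theorem logit_half : logit (1 / 2) = 0 := by
  norm_num [logit]

theorem logit_one_sub {α : ℝ} (hα : α ≠ 0) : logit (1 - α) = log (1 / α - 1) := by
  rw [logit, sub_sub_cancel]
  congr 1
  field_simp

theorem logit_strictMonoOn : StrictMonoOn logit (Ioo 0 1) := by
  rintro v ⟨hv0, hv1⟩ w ⟨hw0, hw1⟩ hvw
  refine log_lt_log (div_pos hv0 (sub_pos.2 hv1)) ?_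
  rw [div_lt_div_iff₀ (sub_pos.2 hv1) (sub_pos.2 hw1)]
  nlinarith

theorem exp_logit {w : ℝ} (hw0 : 0 < w) (hw1 : w < 1) : exp (logit w) = w / (1 - w) :=
  exp_log (div_pos hw0 (sub_pos.2 hw1))

theorem softplus_zero : softplus 0 = log 2 := by
  norm_num [softplus]

theorem softplus_logit {w : ℝ} (hw0 : 0 < w) (hw1 : w < 1) :
    softplus (logit w) = -log (1 - w) := by
  have hw1' : 1 - w ≠ 0 := (sub_pos.2 hw1).ne'
  rw [softplus, exp_logit hw0 hw1, ← log_inv]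
  congr 1
  field_simp
  ring

theorem mul_logit_sub_softplus_logit {w : ℝ} (hw0 : 0 < w) (hw1 : w < 1) (z : ℝ) :
    z * logit w - softplus (logit w) = z * log w + (1 - z) * log (1 - w) := by
  rw [softplus_logit hw0 hw1, logit, log_div hw0.ne' (sub_pos.2 hw1).ne']
  ring

theorem mul_sub_softplus_le_logit {w : ℝ} (hw0 : 0 < w) (hw1 : w < 1) (x : ℝ) :
    w * x - softplus x ≤ w * logit w - softplus (logit w) := by
  have h1w : 0 < 1 - w := sub_pos.2 hw1
  have hjensen : exp (w * (x - logit w)) ≤ (1 - w) + w * exp (x - logit w) := by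
    simpa using convexOn_exp.2 (mem_univ 0) (mem_univ (x - logit w)) h1w.le hw0.le (by ring)
  have hsum : (1 - w) + w * exp (x - logit w) = (1 - w) * (1 + exp x) := by
    rw [exp_sub, exp_logit hw0 hw1]
    field_simp
  rw [hsum, ← le_log_iff_exp_le (mul_pos h1w (by positivity)), log_mul h1w.ne' (by positivity)]
    at hjensen
  rw [softplus_logit hw0 hw1, softplus]
  linarith

theorem mul_sub_softplus_le_tangent {w : ℝ} (hw0 : 0 < w) (hw1 : w < 1) (z x : ℝ) :
    z * x - softplus x ≤ z * logit w - softplus (logit w) + (z - w) * (x - logit w) := by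
  linarith [mul_sub_softplus_le_logit hw0 hw1 x]

theorem mul_sub_softplus_le_of_logit_le {z w x : ℝ} (hw0 : 0 < w) (hw1 : w < 1) (hzw : z ≤ w)
    (hx : logit w ≤ x) : z * x - softplus x ≤ z * logit w - softplus (logit w) := by
  linarith [mul_sub_softplus_le_tangent hw0 hw1 z x,
    mul_nonpos_of_nonpos_of_nonneg (sub_nonpos.2 hzw) (sub_nonneg.2 hx)]

theorem mul_sub_softplus_le_of_le_logit {z w x : ℝ} (hw0 : 0 < w) (hw1 : w < 1) (hwz : w ≤ z)
    (hx : x ≤ logit w) : z * x - softplus x ≤ z * logit w - softplus (logit w) := by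
  linarith [mul_sub_softplus_le_tangent hw0 hw1 z x,
    mul_nonpos_of_nonneg_of_nonpos (sub_nonneg.2 hwz) (sub_nonpos.2 hx)]

theorem mul_sub_softplus_le_neg_log_two_of_nonneg {z x : ℝ} (hz : z ≤ 1 / 2) (hx : 0 ≤ x) :
    z * x - softplus x ≤ -log 2 := by
  have := mul_sub_softplus_le_of_logit_le (by norm_num) (by norm_num) hz (logit_half ▸ hx)
  rwa [logit_half, softplus_zero, mul_zero, zero_sub] at this

theorem mul_sub_softplus_le_neg_log_two_of_nonpos {z x : ℝ} (hz : 1 / 2 ≤ z) (hx : x ≤ 0) :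
    z * x - softplus x ≤ -log 2 := by
  have := mul_sub_softplus_le_of_le_logit (by norm_num) (by norm_num) hz (logit_half ▸ hx)
  rwa [logit_half, softplus_zero, mul_zero, zero_sub] at this

theorem logit_one_sub_neg {α : ℝ} (hα0 : 1 / 2 < α) (hα1 : α < 1) : logit (1 - α) < 0 := by
  rw [← logit_half]
  exact logit_strictMonoOn ⟨by linarith, by linarith⟩ ⟨by norm_num, by norm_num⟩ (by linarith)

/-- `Λ` of the theorem, with its first break point `2 log (1/α - 1)` written as
`2 logit (1 - α)`. -/
def tasepCGF (α θ : ℝ) : ℝ :=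
  if θ ≤ 2 * logit (1 - α) then log (exp θ / (1 - α) + 1 / α) + log (1 / 4)
  else if θ ≤ 0 then 2 * log (1 + exp (θ / 2)) + log (1 / 4)
  else log (1 + exp θ) + log 2 + log (1 / 4)

theorem log_one_div_four : log (1 / 4) = -(2 * log 2) := by
  rw [one_div, log_inv, show (4 : ℝ) = 2 ^ 2 by norm_num, log_pow]
  push_cast
  ring

theorem tasepCGF_of_le {α θ : ℝ} (hα0 : 0 < α) (hα1 : α < 1) (hθ : θ ≤ 2 * logit (1 - α)) :
    tasepCGF α θ = softplus (θ - logit (1 - α)) + softplus (logit (1 - α)) - 2 * log 2 := by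
  have h1α : 0 < 1 - α := sub_pos.2 hα1
  have hsum : exp θ / (1 - α) + 1 / α = (1 + exp (θ - logit (1 - α))) / α := by
    rw [exp_sub, exp_logit h1α (by linarith), sub_sub_cancel]
    field_simp
    ring
  rw [tasepCGF, if_pos hθ, hsum, log_div (by positivity) hα0.ne', softplus_logit h1α (by linarith),
    sub_sub_cancel, log_one_div_four, softplus]
  ring

theorem tasepCGF_of_mem {α θ : ℝ} (h1 : 2 * logit (1 - α) < θ) (h2 : θ ≤ 0) :
    tasepCGF α θ = 2 * softplus (θ / 2) - 2 * log 2 := by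
  rw [tasepCGF, if_neg h1.not_ge, if_pos h2, log_one_div_four, softplus]
  ring

theorem tasepCGF_of_pos {α θ : ℝ} (hα0 : 1 / 2 < α) (hα1 : α < 1) (hθ : 0 < θ) :
    tasepCGF α θ = softplus θ - log 2 := by
  have h1 : ¬θ ≤ 2 * logit (1 - α) := by linarith [logit_one_sub_neg hα0 hα1]
  rw [tasepCGF, if_neg h1, if_neg hθ.not_ge, log_one_div_four, softplus]
  ring

theorem isGreatest_mul_sub_tasepCGF_of_le_one_sub {α z : ℝ} (hα0 : 1 / 2 < α) (hα1 : α < 1)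
    (hz0 : 0 < z) (hz : z ≤ 1 - α) :
    IsGreatest (range fun θ => z * θ - tasepCGF α θ)
      (z * log (z / α) + (1 - z) * log ((1 - z) / (1 - α)) + log (4 * α * (1 - α))) := by
  have hα : 0 < α := by linarith
  have h1α : 0 < 1 - α := sub_pos.2 hα1
  have hz1 : z < 1 := by linarith
  have hmax := mul_sub_softplus_le_logit hz0 hz1
  have hdec : ∀ x, logit (1 - α) ≤ x →
      z * x - softplus x ≤ z * logit (1 - α) - softplus (logit (1 - α)) := fun _ hx =>
    mul_sub_softplus_le_of_logit_le h1α (by linarith) hz hx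
  have hvalue : z * log (z / α) + (1 - z) * log ((1 - z) / (1 - α)) + log (4 * α * (1 - α)) =
      (z * logit z - softplus (logit z)) + (z * logit (1 - α) - softplus (logit (1 - α))) +
        2 * log 2 := by
    rw [mul_logit_sub_softplus_logit hz0 hz1, mul_logit_sub_softplus_logit h1α (by linarith),
      sub_sub_cancel, log_div hz0.ne' hα.ne', log_div (by linarith) h1α.ne',
      log_mul (by positivity) h1α.ne', log_mul (by norm_num) hα.ne',
      show (4 : ℝ) = 2 ^ 2 by norm_num, log_pow]
    push_cast
    ring
  rw [hvalue]
  refine ⟨⟨logit z + logit (1 - α), ?_⟩, ?_⟩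
  · have hθ : logit z + logit (1 - α) ≤ 2 * logit (1 - α) := by
      linarith [(logit_strictMonoOn.le_iff_le ⟨hz0, hz1⟩ ⟨h1α, by linarith⟩).2 hz]
    dsimp only
    rw [tasepCGF_of_le hα hα1 hθ, add_sub_cancel_right]
    ring
  · rintro _ ⟨θ, rfl⟩
    dsimp only
    rcases le_or_gt θ (2 * logit (1 - α)) with h1 | h1
    · rw [tasepCGF_of_le hα hα1 h1]
      linarith [hmax (θ - logit (1 - α))]
    rcases le_or_gt θ 0 with h2 | h2
    · rw [tasepCGF_of_mem h1 h2]
      linarith [hdec (θ / 2) (by linarith), hmax (logit (1 - α))]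
    · rw [tasepCGF_of_pos hα0 hα1 h2]
      linarith [hdec θ (by linarith [logit_one_sub_neg hα0 hα1]), hmax 0, softplus_zero]

theorem isGreatest_mul_sub_tasepCGF_of_mem {α z : ℝ} (hα1 : α < 1) (hz : 1 - α < z)
    (hz2 : z ≤ 1 / 2) :
    IsGreatest (range fun θ => z * θ - tasepCGF α θ)
      (2 * (z * log z + (1 - z) * log (1 - z) + log 2)) := by
  have h1α : 0 < 1 - α := sub_pos.2 hα1
  have hα : 0 < α := by linarith
  have hz0 : 0 < z := by linarith
  have hz1 : z < 1 := by linarith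
  have hmax := mul_sub_softplus_le_logit hz0 hz1
  have hinc : ∀ x, x ≤ logit (1 - α) →
      z * x - softplus x ≤ z * logit (1 - α) - softplus (logit (1 - α)) := fun _ hx =>
    mul_sub_softplus_le_of_le_logit h1α (by linarith) hz.le hx
  rw [← mul_logit_sub_softplus_logit hz0 hz1]
  refine ⟨⟨2 * logit z, ?_⟩, ?_⟩
  · have h1 : 2 * logit (1 - α) < 2 * logit z := by
      linarith [logit_strictMonoOn ⟨h1α, by linarith⟩ ⟨hz0, hz1⟩ hz]
    have h2 : 2 * logit z ≤ 0 := by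
      linarith [logit_half ▸
        (logit_strictMonoOn.le_iff_le ⟨hz0, hz1⟩ ⟨by norm_num, by norm_num⟩).2 hz2]
    dsimp only
    rw [tasepCGF_of_mem h1 h2, mul_div_cancel_left₀ _ two_ne_zero]
    ring
  · rintro _ ⟨θ, rfl⟩
    dsimp only
    rcases le_or_gt θ (2 * logit (1 - α)) with h1 | h1
    · rw [tasepCGF_of_le hα hα1 h1]
      linarith [hinc (θ - logit (1 - α)) (by linarith), hmax (logit (1 - α))]
    rcases le_or_gt θ 0 with h2 | h2
    · rw [tasepCGF_of_mem h1 h2]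
      linarith [hmax (θ / 2)]
    · rw [tasepCGF_of_pos (by linarith) hα1 h2]
      linarith [mul_sub_softplus_le_neg_log_two_of_nonneg hz2 h2.le, hmax 0, softplus_zero]

theorem isGreatest_mul_sub_tasepCGF_of_half_lt {α z : ℝ} (hα0 : 1 / 2 < α) (hα1 : α < 1)
    (hz : 1 / 2 < z) (hz1 : z < 1) :
    IsGreatest (range fun θ => z * θ - tasepCGF α θ)
      (z * log z + (1 - z) * log (1 - z) + log 2) := by
  have h1α : 0 < 1 - α := sub_pos.2 hα1
  have hα : 0 < α := by linarith
  have hz0 : 0 < z := by linarith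
  have hx₀ := logit_one_sub_neg hα0 hα1
  have hmax := mul_sub_softplus_le_logit hz0 hz1
  have hinc : ∀ x, x ≤ logit (1 - α) →
      z * x - softplus x ≤ z * logit (1 - α) - softplus (logit (1 - α)) := fun _ hx =>
    mul_sub_softplus_le_of_le_logit h1α (by linarith) (by linarith) hx
  rw [← mul_logit_sub_softplus_logit hz0 hz1]
  refine ⟨⟨logit z, ?_⟩, ?_⟩
  · have h : 0 < logit z := by
      simpa only [logit_half] using logit_strictMonoOn ⟨by norm_num, by norm_num⟩ ⟨hz0, hz1⟩ hz
    dsimp only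
    rw [tasepCGF_of_pos hα0 hα1 h]
    ring
  · rintro _ ⟨θ, rfl⟩
    dsimp only
    rcases le_or_gt θ (2 * logit (1 - α)) with h1 | h1
    · rw [tasepCGF_of_le hα hα1 h1]
      linarith [hinc (θ - logit (1 - α)) (by linarith),
        mul_sub_softplus_le_neg_log_two_of_nonpos hz.le hx₀.le, hmax (logit (1 - α))]
    rcases le_or_gt θ 0 with h2 | h2
    · rw [tasepCGF_of_mem h1 h2]
      linarith [mul_sub_softplus_le_neg_log_two_of_nonpos hz.le (by linarith : θ / 2 ≤ 0),
        hmax (θ / 2)]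
    · rw [tasepCGF_of_pos hα0 hα1 h2]
      linarith [hmax θ]

end

open Real in
theorem stmt_16 (α : ℝ) (hα0 : 1 / 2 < α) (hα1 : α < 1)
    (Λ : ℝ → ℝ)
    (hΛ : ∀ θ : ℝ, Λ θ =
      if θ ≤ 2 * log (1 / α - 1) then log (exp θ / (1 - α) + 1 / α) + log (1 / 4)
      else if θ ≤ 0 then 2 * log (1 + exp (θ / 2)) + log (1 / 4)
      else log (1 + exp θ) + log 2 + log (1 / 4))
    (I : ℝ → ℝ)
    (hI : ∀ z : ℝ, I z = sSup (Set.range fun θ : ℝ => z * θ - Λ θ)) :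
    ∀ z : ℝ, 0 < z → z < 1 →
      ((z ≤ 1 - α →
          I z = z * log (z / α) + (1 - z) * log ((1 - z) / (1 - α)) + log (4 * α * (1 - α))) ∧
        (1 - α < z → z ≤ 1 / 2 →
          I z = 2 * (z * log z + (1 - z) * log (1 - z) + log 2)) ∧
        (1 / 2 < z →
          I z = z * log z + (1 - z) * log (1 - z) + log 2)) := by
  intro z hz0 hz1
  have hΛ_eq : Λ = tasepCGF α := by
    funext θ
    rw [hΛ, tasepCGF, logit_one_sub (by linarith)]
  rw [hI, hΛ_eq]
  exact ⟨fun hz => (isGreatest_mul_sub_tasepCGF_of_le_one_sub hα0 hα1 hz0 hz).csSup_eq,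
    fun hz hz2 => (isGreatest_mul_sub_tasepCGF_of_mem hα1 hz hz2).csSup_eq,
    fun hz => (isGreatest_mul_sub_tasepCGF_of_half_lt hα0 hα1 hz hz1).csSup_eq⟩
end

section
/- Let 1/2 < ρ < α < 1, c = ρ(1−ρ), λ₁ = ρ/(1−ρ). The function I : (0,1) → ℝ given by I(z) = z log(z/α) + (1−z)log((1−z)/(1−α)) + log(α(1−α)/(ρ(1−ρ))) for 0 < z ≤ 1−α, I(z) = 2[z log z + (1−z)log(1−z)] − log(ρ(1−ρ)) for 1−α < z ≤ 1−ρ, and I(z) = z log(z/ρ) + (1−z)log((1−z)/(1−ρ)) for 1−ρ < z < 1, is convex, nonnegative, and has a unique zero at z = ρ. -/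
/-!
Write `H z = z log z + (1 - z) log (1 - z) = -binEntropy z` and let `L t` be its tangent line at `t`.
Then `I = H + N - log (ρ (1 - ρ))`, where `N` is the upper envelope of the tangent lines `L t`,
`t ∈ [1 - α, 1 - ρ]`; the envelope is attained at the projection of `z` onto that interval, which
reproduces the three pieces of `I`. Both `H` and `N` are convex, being upper envelopes of affine
functions. Since `L ρ + L (1 - ρ)` is the constant `log (ρ (1 - ρ))`, we also get
`I = (H - L ρ) + (N - L (1 - ρ))`, a sum of two nonnegative terms (Gibbs' inequality) of which the
first vanishes only at `ρ`.
-/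

open Real Set

lemma convexOn_of_forall_supportingLine {s : Set ℝ} (hs : Convex ℝ s) {f : ℝ → ℝ}
    (h : ∀ p ∈ s, ∃ m : ℝ, ∀ z ∈ s, f p + m * (z - p) ≤ f z) : ConvexOn ℝ s f := by
  refine ⟨hs, fun x hx y hy u v hu hv huv => ?_⟩
  obtain ⟨m, hm⟩ := h (u • x + v • y) (hs hx hy hu hv huv)
  have hx' := mul_le_mul_of_nonneg_left (hm x hx) hu
  have hy' := mul_le_mul_of_nonneg_left (hm y hy) hv
  obtain rfl : u = 1 - v := by linarith
  simp only [smul_eq_mul] at *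
  linarith

lemma mul_log_div_lt_sub {t z : ℝ} (ht : 0 < t) (hz : 0 < z) (hne : t ≠ z) :
    z * log (t / z) < t - z := by
  have hlog := log_lt_sub_one_of_pos (div_pos ht hz) (by rwa [Ne, div_eq_one_iff_eq hz.ne'])
  calc z * log (t / z) < z * (t / z - 1) := mul_lt_mul_of_pos_left hlog hz
    _ = t - z := by field_simp

lemma mul_log_div_le_sub {t z : ℝ} (ht : 0 < t) (hz : 0 < z) : z * log (t / z) ≤ t - z := by
  rcases eq_or_ne t z with rfl | hne
  · simp
  · exact (mul_log_div_lt_sub ht hz hne).le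

lemma neg_binEntropy_eq (z : ℝ) : -binEntropy z = z * log z + (1 - z) * log (1 - z) := by
  simp only [binEntropy_eq_negMulLog_add_negMulLog_one_sub, negMulLog]
  ring

/-- The tangent line of `-binEntropy` at `t` (minus a Bernoulli cross entropy). -/
noncomputable def binTangent (t z : ℝ) : ℝ := z * log t + (1 - z) * log (1 - t)

lemma binTangent_self (z : ℝ) : binTangent z z = -binEntropy z := by
  rw [neg_binEntropy_eq, binTangent]

lemma binTangent_eq_add_mul_sub (t p z : ℝ) :
    binTangent t z = binTangent t p + (log t - log (1 - t)) * (z - p) := by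
  unfold binTangent
  ring

lemma binTangent_one_sub (t z : ℝ) : binTangent (1 - t) (1 - z) = binTangent t z := by
  simp only [binTangent, sub_sub_cancel]
  ring

lemma binTangent_add_binTangent_one_sub (t z : ℝ) :
    binTangent t z + binTangent (1 - t) z = log t + log (1 - t) := by
  simp only [binTangent, sub_sub_cancel]
  ring

lemma binTangent_lt_neg_binEntropy {t z : ℝ} (ht : t ∈ Ioo 0 1) (hz : z ∈ Ioo 0 1)
    (hne : t ≠ z) : binTangent t z < -binEntropy z := by
  obtain ⟨ht₀, ht₁⟩ := ht
  obtain ⟨hz₀, hz₁⟩ := hz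
  have h₀ := mul_log_div_lt_sub ht₀ hz₀ hne
  have h₁ := mul_log_div_le_sub (sub_pos.2 ht₁) (sub_pos.2 hz₁)
  rw [log_div ht₀.ne' hz₀.ne'] at h₀
  rw [log_div (sub_pos.2 ht₁).ne' (sub_pos.2 hz₁).ne'] at h₁
  rw [neg_binEntropy_eq, binTangent]
  linarith

lemma binTangent_le_neg_binEntropy {t z : ℝ} (ht : t ∈ Ioo 0 1) (hz : z ∈ Ioo 0 1) :
    binTangent t z ≤ -binEntropy z := by
  rcases eq_or_ne t z with rfl | hne
  · exact (binTangent_self t).le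
  · exact (binTangent_lt_neg_binEntropy ht hz hne).le

lemma binTangent_le_binTangent_of_le_of_le {s t z : ℝ} (hs : 0 < s) (ht : t < 1)
    (hzs : z ≤ s) (hst : s ≤ t) : binTangent t z ≤ binTangent s z := by
  have htangent : binTangent t s ≤ binTangent s s := by
    rw [binTangent_self]
    exact binTangent_le_neg_binEntropy ⟨hs.trans_le hst, ht⟩ ⟨hs, hst.trans_lt ht⟩
  have hslope : log s - log (1 - s) ≤ log t - log (1 - t) := by
    have := log_le_log hs hst
    have := log_le_log (sub_pos.2 ht) (by linarith : 1 - t ≤ 1 - s)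
    linarith
  rw [binTangent_eq_add_mul_sub t s z, binTangent_eq_add_mul_sub s s z]
  nlinarith

lemma binTangent_le_binTangent_of_ge_of_ge {s t z : ℝ} (ht : 0 < t) (hs : s < 1)
    (hts : t ≤ s) (hsz : s ≤ z) : binTangent t z ≤ binTangent s z := by
  rw [← binTangent_one_sub t, ← binTangent_one_sub s]
  exact binTangent_le_binTangent_of_le_of_le (by linarith) (by linarith) (by linarith)
    (by linarith)

noncomputable def clampedTangent (a b z : ℝ) : ℝ := binTangent (max a (min z b)) z

lemma clampedTangent_eq_ite {a b : ℝ} (hab : a ≤ b) (z : ℝ) :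
    clampedTangent a b z =
      if z ≤ a then binTangent a z else if z ≤ b then -binEntropy z else binTangent b z := by
  unfold clampedTangent
  split_ifs with hza hzb
  · rw [min_eq_left (hza.trans hab), max_eq_left hza]
  · rw [min_eq_left hzb, max_eq_right (not_le.1 hza).le, binTangent_self]
  · rw [min_eq_right (not_le.1 hzb).le, max_eq_right hab]

lemma binTangent_le_clampedTangent {a b t : ℝ} (ha : 0 < a) (hb : b < 1) (hat : a ≤ t)
    (htb : t ≤ b) (z : ℝ) : binTangent t z ≤ clampedTangent a b z := by
  rw [clampedTangent_eq_ite (hat.trans htb)]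
  split_ifs with hza hzb
  · exact binTangent_le_binTangent_of_le_of_le ha (htb.trans_lt hb) hza hat
  · exact binTangent_le_neg_binEntropy ⟨ha.trans_le hat, htb.trans_lt hb⟩
      ⟨ha.trans (not_le.1 hza), hzb.trans_lt hb⟩
  · exact binTangent_le_binTangent_of_ge_of_ge (ha.trans_le hat) hb htb (not_le.1 hzb).le

lemma convexOn_clampedTangent {a b : ℝ} (ha : 0 < a) (hab : a ≤ b) (hb : b < 1) :
    ConvexOn ℝ univ (clampedTangent a b) := by
  refine convexOn_of_forall_supportingLine convex_univ fun p _ => ?_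
  set t := max a (min p b)
  refine ⟨log t - log (1 - t), fun z _ => ?_⟩
  rw [clampedTangent, ← binTangent_eq_add_mul_sub]
  exact binTangent_le_clampedTangent ha hb (le_max_left _ _) (max_le hab (min_le_right _ _)) z

lemma convexOn_neg_binEntropy : ConvexOn ℝ (Ioo 0 1) fun z => -binEntropy z :=
  strictConcave_binEntropy.concaveOn.neg.subset Ioo_subset_Icc_self (convex_Ioo 0 1)

noncomputable def rateFunction (ρ α z : ℝ) : ℝ :=
  if z ≤ 1 - α then
    z * log (z / α) + (1 - z) * log ((1 - z) / (1 - α)) + log (α * (1 - α) / (ρ * (1 - ρ)))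
  else if z ≤ 1 - ρ then
    2 * (z * log z + (1 - z) * log (1 - z)) - log (ρ * (1 - ρ))
  else
    z * log (z / ρ) + (1 - z) * log ((1 - z) / (1 - ρ))

section rateFunction

variable {ρ α : ℝ}

lemma rateFunction_eqOn (hρ₀ : 0 < ρ) (hρα : ρ ≤ α) (hα : α < 1) :
    EqOn (fun z => -binEntropy z + clampedTangent (1 - α) (1 - ρ) z - log (ρ * (1 - ρ)))
      (rateFunction ρ α) (Ioo 0 1) := by
  rintro z ⟨hz₀, hz₁⟩
  have hρ₁ : 0 < 1 - ρ := by linarith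
  have hα₀ : 0 < α := by linarith
  have hα₁ : 0 < 1 - α := by linarith
  have hz₁' : 0 < 1 - z := by linarith
  dsimp only
  rw [rateFunction, clampedTangent_eq_ite (by linarith)]
  simp only [neg_binEntropy_eq]
  split_ifs
  · rw [binTangent, sub_sub_cancel, log_div hz₀.ne' hα₀.ne', log_div hz₁'.ne' hα₁.ne',
      log_div (by positivity) (by positivity), log_mul hα₀.ne' hα₁.ne']
    ring
  · ring
  · rw [binTangent, sub_sub_cancel, log_div hz₀.ne' hρ₀.ne', log_div hz₁'.ne' hρ₁.ne',
      log_mul hρ₀.ne' hρ₁.ne']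
    ring

lemma convexOn_rateFunction (hρ₀ : 0 < ρ) (hρα : ρ ≤ α) (hα : α < 1) :
    ConvexOn ℝ (Ioo 0 1) (rateFunction ρ α) :=
  ((convexOn_neg_binEntropy.add ((convexOn_clampedTangent (by linarith) (by linarith)
    (by linarith)).subset (subset_univ _) (convex_Ioo 0 1))).add_const _).congr
    (rateFunction_eqOn hρ₀ hρα hα)

lemma rateFunction_eq_add (hρ₀ : 0 < ρ) (hρα : ρ ≤ α) (hα : α < 1) {z : ℝ} (hz : z ∈ Ioo 0 1) :
    rateFunction ρ α z = (-binEntropy z - binTangent ρ z)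
      + (clampedTangent (1 - α) (1 - ρ) z - binTangent (1 - ρ) z) := by
  rw [← rateFunction_eqOn hρ₀ hρα hα hz, log_mul hρ₀.ne' (by linarith),
    ← binTangent_add_binTangent_one_sub ρ z]
  ring

end rateFunction

open Real in
theorem stmt_17 (ρ α : ℝ) (hρ : 1 / 2 < ρ) (hρα : ρ < α) (hα : α < 1)
    (I : ℝ → ℝ)
    (hI : ∀ z : ℝ, I z =
      if z ≤ 1 - α then
        z * log (z / α) + (1 - z) * log ((1 - z) / (1 - α)) + log (α * (1 - α) / (ρ * (1 - ρ)))
      else if z ≤ 1 - ρ then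
        2 * (z * log z + (1 - z) * log (1 - z)) - log (ρ * (1 - ρ))
      else
        z * log (z / ρ) + (1 - z) * log ((1 - z) / (1 - ρ))) :
    ConvexOn ℝ (Set.Ioo (0 : ℝ) 1) I ∧
      (∀ z ∈ Set.Ioo (0 : ℝ) 1, 0 ≤ I z) ∧
      I ρ = 0 ∧
      (∀ z ∈ Set.Ioo (0 : ℝ) 1, I z = 0 → z = ρ) := by
  obtain rfl : I = rateFunction ρ α := funext hI
  have hρ₀ : 0 < ρ := by linarith
  have hρI : ρ ∈ Ioo (0 : ℝ) 1 := ⟨hρ₀, by linarith⟩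
  have hdecomp := fun z (hz : z ∈ Ioo (0 : ℝ) 1) => rateFunction_eq_add hρ₀ hρα.le hα hz
  have hgap : ∀ z, 0 ≤ clampedTangent (1 - α) (1 - ρ) z - binTangent (1 - ρ) z := fun z =>
    sub_nonneg.2 (binTangent_le_clampedTangent (by linarith) (by linarith) (by linarith) le_rfl z)
  refine ⟨convexOn_rateFunction hρ₀ hρα.le hα, fun z hz => ?_, ?_, fun z hz hIz => ?_⟩
  · rw [hdecomp z hz]
    exact add_nonneg (sub_nonneg.2 (binTangent_le_neg_binEntropy hρI hz)) (hgap z)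
  · rw [hdecomp ρ hρI, binTangent_self, clampedTangent_eq_ite (by linarith), if_neg (by linarith),
      if_neg (by linarith)]
    ring
  · by_contra hne
    have := binTangent_lt_neg_binEntropy hρI hz (Ne.symm hne)
    linarith [hdecomp z hz, hgap z]
end

section
/- Let α > 0 and θ ∈ ℝ. The function H(ε,δ) = (1−δ)log(1−δ) − (1−δ−ε)log(1−δ−ε) − δ log α − 2ε log ε − (1−ε)log(1−ε) + εθ on the domain 0 ≤ δ ≤ 1, 0 ≤ ε ≤ 1−δ (with 0 log 0 = 0), maximized first over δ for fixed ε ∈ [0,1], attains its maximum at δ = 0 if ε ≥ 1−α and at δ = 1 − ε/(1−α) if ε < 1−α (assuming 0 < α < 1). -/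
/-!
For fixed `ε`, the `δ`-derivative of `H ε` is `log (1 - δ - ε) - log (1 - δ) - log α`, which is
nonnegative exactly when `α (1 - δ) ≤ 1 - δ - ε`, i.e. when `δ ≤ δ* := 1 - ε / (1 - α)`. So `H ε`
increases up to `δ*` and decreases from `δ*` to the edge `δ = 1 - ε` of the domain (it stays
continuous there because `x log x` is continuous at `0`). When `ε ≥ 1 - α` we have `δ* ≤ 0`, and the
maximum over `[0, 1 - ε]` is at `δ = 0`; otherwise it is at `δ* ∈ [0, 1 - ε]`.
-/

open Real Set

theorem le_of_monotoneOn_Iic_of_antitoneOn_Icc {β γ : Type*} [LinearOrder β] [Preorder γ]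
    {f : β → γ} {b c x : β} (hmono : MonotoneOn f (Iic b)) (hanti : AntitoneOn f (Icc b c))
    (hxc : x ≤ c) : f x ≤ f b := by
  rcases le_total x b with hxb | hbx
  · exact hmono hxb le_rfl hxb
  · exact hanti ⟨le_rfl, hbx.trans hxc⟩ ⟨hbx, hxc⟩ hbx

noncomputable def laplaceExponent (α θ ε δ : ℝ) : ℝ :=
  (1 - δ) * log (1 - δ) - (1 - δ - ε) * log (1 - δ - ε) - δ * log α
    - 2 * ε * log ε - (1 - ε) * log (1 - ε) + ε * θ

theorem continuous_laplaceExponent (α θ ε : ℝ) : Continuous (laplaceExponent α θ ε) := by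
  have hA : Continuous fun δ : ℝ => (1 - δ) * log (1 - δ) :=
    continuous_mul_log.comp (continuous_sub_left 1)
  have hB : Continuous fun δ : ℝ => (1 - δ - ε) * log (1 - δ - ε) :=
    continuous_mul_log.comp ((continuous_sub_left 1).sub continuous_const)
  unfold laplaceExponent
  fun_prop

theorem hasDerivAt_laplaceExponent (α θ ε : ℝ) {δ : ℝ} (h1 : 1 - δ ≠ 0) (h2 : 1 - δ - ε ≠ 0) :
    HasDerivAt (laplaceExponent α θ ε) (log (1 - δ - ε) - log (1 - δ) - log α) δ := by
  have hA : HasDerivAt (fun x : ℝ => (1 - x) * log (1 - x)) ((log (1 - δ) + 1) * (-1)) δ :=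
    (hasDerivAt_mul_log h1).comp δ ((hasDerivAt_id δ).const_sub 1)
  have hB : HasDerivAt (fun x : ℝ => (1 - x - ε) * log (1 - x - ε))
      ((log (1 - δ - ε) + 1) * (-1)) δ := by
    exact (hasDerivAt_mul_log h2).comp δ (((hasDerivAt_id δ).const_sub 1).sub_const ε)
  have hC : HasDerivAt (fun x : ℝ => x * log α) (1 * log α) δ :=
    (hasDerivAt_id δ).mul_const (log α)
  refine ((((hA.sub hB).sub hC).sub_const (2 * ε * log ε)).sub_const
    ((1 - ε) * log (1 - ε))).add_const (ε * θ) |>.congr_deriv ?_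
  ring

section

variable {α : ℝ} (θ : ℝ) {ε : ℝ}

theorem monotoneOn_laplaceExponent (hα0 : 0 < α) (hα1 : α < 1) (hε : 0 ≤ ε) :
    MonotoneOn (laplaceExponent α θ ε) (Iic (1 - ε / (1 - α))) := by
  have bounds : ∀ δ ∈ interior (Iic (1 - ε / (1 - α))),
      0 < 1 - δ ∧ α * (1 - δ) < 1 - δ - ε := by
    rw [interior_Iic]
    intro δ (hδ : δ < 1 - ε / (1 - α))
    have hcrit : ε < (1 - α) * (1 - δ) := by
      rw [← div_lt_iff₀' (by linarith)]
      linarith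
    constructor <;> nlinarith
  refine monotoneOn_of_hasDerivWithinAt_nonneg
    (f' := fun δ => log (1 - δ - ε) - log (1 - δ) - log α) (convex_Iic _)
    (continuous_laplaceExponent α θ ε).continuousOn (fun δ hδ => ?_) (fun δ hδ => ?_)
    <;> obtain ⟨h1, hlt⟩ := bounds δ hδ
  · exact (hasDerivAt_laplaceExponent α θ ε h1.ne' (by nlinarith)).hasDerivWithinAt
  · rw [sub_sub, ← log_mul h1.ne' hα0.ne', sub_nonneg, mul_comm]
    exact log_le_log (by positivity) hlt.le

theorem antitoneOn_laplaceExponent (hα0 : 0 < α) (hα1 : α < 1) (hε : 0 ≤ ε) :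
    AntitoneOn (laplaceExponent α θ ε) (Icc (1 - ε / (1 - α)) (1 - ε)) := by
  have bounds : ∀ δ ∈ interior (Icc (1 - ε / (1 - α)) (1 - ε)),
      0 < 1 - δ ∧ 0 < 1 - δ - ε ∧ 1 - δ - ε < α * (1 - δ) := by
    rw [interior_Icc]
    rintro δ ⟨hδl, hδr⟩
    have hcrit : (1 - α) * (1 - δ) < ε := by
      rw [← lt_div_iff₀' (by linarith)]
      linarith
    refine ⟨?_, ?_, ?_⟩ <;> linarith
  refine antitoneOn_of_hasDerivWithinAt_nonpos
    (f' := fun δ => log (1 - δ - ε) - log (1 - δ) - log α) (convex_Icc _ _)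
    (continuous_laplaceExponent α θ ε).continuousOn (fun δ hδ => ?_) (fun δ hδ => ?_)
    <;> obtain ⟨h1, h2, hlt⟩ := bounds δ hδ
  · exact (hasDerivAt_laplaceExponent α θ ε h1.ne' h2.ne').hasDerivWithinAt
  · rw [sub_sub, ← log_mul h1.ne' hα0.ne', sub_nonpos, mul_comm]
    exact log_le_log h2 hlt.le

end

open Real in
/-- Note `Real.log 0 = 0` in Mathlib, encoding the convention `0 · log 0 = 0`. -/
theorem stmt_18 (α θ : ℝ) (hα0 : 0 < α) (hα1 : α < 1)
    (H : ℝ → ℝ → ℝ)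
    (hH : ∀ ε δ : ℝ, H ε δ =
      (1 - δ) * log (1 - δ) - (1 - δ - ε) * log (1 - δ - ε) - δ * log α
        - 2 * ε * log ε - (1 - ε) * log (1 - ε) + ε * θ) :
    ∀ ε : ℝ, 0 ≤ ε → ε ≤ 1 →
      ((1 - α ≤ ε → ∀ δ : ℝ, 0 ≤ δ → ε ≤ 1 - δ → H ε δ ≤ H ε 0) ∧
        (ε < 1 - α → ∀ δ : ℝ, 0 ≤ δ → ε ≤ 1 - δ → H ε δ ≤ H ε (1 - ε / (1 - α)))) := by
  intro ε hε _
  obtain rfl : H = laplaceExponent α θ := funext fun ε => funext (hH ε)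
  have hmono := monotoneOn_laplaceExponent θ hα0 hα1 hε
  have hanti := antitoneOn_laplaceExponent θ hα0 hα1 hε
  refine ⟨fun hlarge δ hδ0 hδ1 => ?_, fun _ δ _ hδ1 =>
    le_of_monotoneOn_Iic_of_antitoneOn_Icc hmono hanti (by linarith)⟩
  have hcrit : 1 - ε / (1 - α) ≤ 0 := by
    rw [sub_nonpos, one_le_div₀ (by linarith)]
    exact hlarge
  exact hanti ⟨hcrit, by linarith⟩ ⟨hcrit.trans hδ0, by linarith⟩ hδ0
end
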